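/- arXiv:1910.04361 — 7 statements merged into one kernel-verified Lean document; each statement's English description precedes it below -/
import Mathlib

section
/- Let M be a uniform matroid (every subset of the ground set of size at most r is independent, and no set of size greater than r is independent, where r = r(M)), and let λ be a positive integer. If U is a subset of the ground set of M with λ_M(U) ≤ λ, then the equivalence relation ∼_U on the subsets of U has at most λ + 2 equivalence classes. (Hence the class of uniform matroids is strongly pigeonhole.) -/
open Set

noncomputable def mrank {α : Type*} (M : Matroid α) (X : Set α) : ℕ :=
  sSup {n | ∃ I, I ⊆ X ∧ M.Indep I ∧ I.ncard = n}

noncomputable def connVal {α : Type*} (M : Matroid α) (U : Set α) : ℕ :=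
  mrank M U + mrank M (M.E \ U) - mrank M M.E

def Sim {α : Type*} (M : Matroid α) (U X X' : Set α) : Prop :=
  ∀ Z ⊆ M.E \ U, (M.Indep (X ∪ Z) ↔ M.Indep (X' ∪ Z))

def SimClassesLE {α : Type*} (M : Matroid α) (U : Set α) (k : ℕ) : Prop :=
  ∃ f : Set α → Fin k, ∀ X X' : Set α, X ⊆ U → X' ⊆ U → f X = f X' → Sim M U X X'

structure Decomp {α : Type*} (M : Matroid α) where
  V : Type
  fin : Finite V
  T : SimpleGraph V
  conn : T.Connected
  acyc : T.IsAcyclic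
  deg : ∀ v : V, (T.neighborSet v).ncard = 1 ∨ (T.neighborSet v).ncard = 3
  leafEquiv : M.E ≃ {v : V // (T.neighborSet v).ncard = 1}

def Decomp.Displays {α : Type*} {M : Matroid α} (D : Decomp M) (U : Set α) : Prop :=
  ∃ u v : D.V, D.T.Adj u v ∧
    U = {x | ∃ h : x ∈ M.E, (D.T.deleteEdges {s(u, v)}).Reachable (D.leafEquiv ⟨x, h⟩).1 u}

def bwLE {α : Type*} (M : Matroid α) (k : ℕ) : Prop :=
  ∃ D : Decomp M, ∀ U, D.Displays U → connVal M U + 1 ≤ k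

def dwLE {α : Type*} (M : Matroid α) (k : ℕ) : Prop :=
  ∃ D : Decomp M, ∀ U, D.Displays U → SimClassesLE M U k

def Pigeonhole {α : Type*} (C : Set (Matroid α)) : Prop :=
  ∀ l : ℕ, 0 < l → ∃ ρ : ℕ, ∀ M ∈ C, bwLE M l → dwLE M ρ

/-! In a uniform matroid of rank `r`, for `X ⊆ U` and `Z ⊆ E \ U` the set `X ∪ Z` is
independent iff `|X| + |Z| ≤ r`. Since `|Z| ≤ b := |E \ U|`, the class of `X` under `∼_U` is
determined by `min |X| (r + 1)`, and all `X` with `|X| ≤ r - min b r` are equivalent. So the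
classes are indexed by `min |X| (r + 1) - (r - min b r)`, which is at most
`min |U| r + min b r - r + 1 = λ_M(U) + 1`. -/

section Uniform

variable {α : Type*} {M : Matroid α}

lemma simClassesLE_of_bounded_invariant {U : Set α} {k : ℕ} (g : Set α → ℕ)
    (hg : ∀ X ⊆ U, g X ≤ k) (hsim : ∀ X ⊆ U, ∀ X' ⊆ U, g X = g X' → Sim M U X X') :
    SimClassesLE M U (k + 1) := by
  refine ⟨fun X => ⟨min (g X) k, by omega⟩, fun X X' hX hX' hXX' => hsim X hX X' hX' ?_⟩
  rwa [Fin.mk.injEq, min_eq_left (hg X hX), min_eq_left (hg X' hX')] at hXX'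

lemma mrank_eq_min_of_uniform {r : ℕ} (hunif : ∀ X ⊆ M.E, (M.Indep X ↔ X.ncard ≤ r))
    {S : Set α} (hSE : S ⊆ M.E) (hS : S.Finite) :
    mrank M S = min S.ncard r := by
  have hsizes : {n | ∃ I, I ⊆ S ∧ M.Indep I ∧ I.ncard = n} = Iic (min S.ncard r) := by
    ext n
    constructor
    · rintro ⟨I, hIS, hI, rfl⟩
      exact le_min (ncard_le_ncard hIS hS) ((hunif I (hIS.trans hSE)).1 hI)
    · intro hn
      obtain ⟨I, hIS, rfl⟩ := exists_subset_card_eq (hn.trans (min_le_left _ _))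
      exact ⟨I, hIS, (hunif I (hIS.trans hSE)).2 (hn.trans (min_le_right _ _)), rfl⟩
  rw [mrank, hsizes, csSup_Iic]

lemma indep_union_iff_of_uniform {r : ℕ} (hunif : ∀ X ⊆ M.E, (M.Indep X ↔ X.ncard ≤ r))
    (hfin : M.E.Finite) {U X Z : Set α} (hU : U ⊆ M.E) (hX : X ⊆ U) (hZ : Z ⊆ M.E \ U) :
    M.Indep (X ∪ Z) ↔ X.ncard + Z.ncard ≤ r := by
  have hZE : Z ⊆ M.E := hZ.trans sdiff_subset
  have hdisj : Disjoint X Z := disjoint_of_subset hX hZ disjoint_sdiff_right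
  rw [hunif _ (union_subset (hX.trans hU) hZE),
    ncard_union_eq hdisj (hfin.subset (hX.trans hU)) (hfin.subset hZE)]

lemma add_le_iff_truncated_add_le {x z r b : ℕ} (hz : z ≤ b) :
    x + z ≤ r ↔ min x (r + 1) - (r - min b r) + z ≤ min b r := by
  omega

lemma sim_of_uniform {r : ℕ} (hunif : ∀ X ⊆ M.E, (M.Indep X ↔ X.ncard ≤ r))
    (hfin : M.E.Finite) {U X X' : Set α} (hU : U ⊆ M.E) (hX : X ⊆ U) (hX' : X' ⊆ U)
    (h : min X.ncard (r + 1) - (r - min (M.E \ U).ncard r) =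
      min X'.ncard (r + 1) - (r - min (M.E \ U).ncard r)) :
    Sim M U X X' := by
  intro Z hZ
  have hZb : Z.ncard ≤ (M.E \ U).ncard := ncard_le_ncard hZ (hfin.subset sdiff_subset)
  rw [indep_union_iff_of_uniform hunif hfin hU hX hZ,
    indep_union_iff_of_uniform hunif hfin hU hX' hZ,
    add_le_iff_truncated_add_le (x := X.ncard) hZb,
    add_le_iff_truncated_add_le (x := X'.ncard) hZb, h]

end Uniform

theorem uniform_sim_classes_general {α : Type*} (M : Matroid α) (hfin : M.E.Finite)
    (hunif : ∀ X ⊆ M.E, (M.Indep X ↔ X.ncard ≤ mrank M M.E))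
    (l : ℕ) (U : Set α) (hU : U ⊆ M.E)
    (hconn : connVal M U ≤ l) :
    SimClassesLE M U (l + 2) := by
  set r := mrank M M.E
  set c := r - min (M.E \ U).ncard r
  have hconn_min : min U.ncard r + min (M.E \ U).ncard r - r ≤ l := by
    rwa [connVal, mrank_eq_min_of_uniform hunif hU (hfin.subset hU),
      mrank_eq_min_of_uniform hunif sdiff_subset (hfin.subset sdiff_subset)] at hconn
  refine simClassesLE_of_bounded_invariant (fun X => min X.ncard (r + 1) - c)
    (fun X hX => ?_) (fun X hX X' hX' h => sim_of_uniform hunif hfin hU hX hX' h)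
  have hXU : X.ncard ≤ U.ncard := ncard_le_ncard hX (hfin.subset hU)
  omega

/-- uniform matroids: if λ_M(U) ≤ λ then ∼_U has at most λ + 2 classes. -/
theorem uniform_sim_classes {α : Type*} (M : Matroid α) (hfin : M.E.Finite)
    (hunif : ∀ X ⊆ M.E, (M.Indep X ↔ X.ncard ≤ mrank M M.E))
    (l : ℕ) (hl : 0 < l) (U : Set α) (hU : U ⊆ M.E)
    (hconn : connVal M U ≤ l) :
    SimClassesLE M U (l + 2) :=
  uniform_sim_classes_general M hfin hunif l U hU hconn
end

section
/- Let F be a finite field with q elements and let λ be a positive integer. For every F-representable matroid M and every subset U of its ground set satisfying λ_M(U) ≤ λ, the number of equivalence classes of the relation ∼_U on the subsets of U is at most 2^{q^{λ−1} + q^{λ−2} + ⋯ + q + 1} + 1. (Hence the class of F-representable matroids is strongly pigeonhole.) -/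
open Set

/-!
Let `v` represent `M` and put `S = span v(E ∖ U)`. For independent `X ⊆ U` and `Z ⊆ E ∖ U`, the
set `X ∪ Z` is independent iff `Z` is and `span v(X) ⊓ span v(Z) = 0`; as `span v(Z) ≤ S`, this
depends on `X` only through `span v(X) ⊓ S`, a subspace of `G = span v(U) ⊓ S`. By the modular law
`dim G = λ_M(U) ≤ λ`, and a subspace of `G` is determined by the projective points it contains, of
which there are at most `q^(λ-1) + ⋯ + q + 1`. The dependent subsets of `U` form one more class.
-/

open Submodule Module
open scoped LinearAlgebra.Projectivization

section

variable {α : Type*}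

theorem SimClassesLE.mono {M : Matroid α} {U : Set α} {k k' : ℕ} (h : SimClassesLE M U k)
    (hk : k ≤ k') : SimClassesLE M U k' := by
  obtain ⟨f, hf⟩ := h
  exact ⟨fun X => Fin.castLE hk (f X), fun X X' hX hX' hXX' =>
    hf X X' hX hX' (Fin.castLE_injective hk hXX')⟩

theorem sim_of_not_indep {M : Matroid α} {U X X' : Set α} (hX : ¬ M.Indep X)
    (hX' : ¬ M.Indep X') : Sim M U X X' := fun _ _ =>
  iff_of_false (fun h => hX (h.subset subset_union_left))
    (fun h => hX' (h.subset subset_union_left))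

theorem SimClassesLE.of_indep_invariant {M : Matroid α} {U : Set α} {β : Type*} [Finite β]
    (g : Set α → β) (hg : ∀ X X', X ⊆ U → X' ⊆ U → M.Indep X → M.Indep X' → g X = g X' →
      Sim M U X X') :
    SimClassesLE M U (Nat.card β + 1) := by
  classical
  let e := (Finite.equivFin (Option β)).trans (finCongr Finite.card_option)
  refine ⟨fun X => e (if M.Indep X then some (g X) else none), fun X X' hX hX' hXX' => ?_⟩
  replace hXX' := e.injective hXX'
  by_cases hXi : M.Indep X <;> by_cases hX'i : M.Indep X' <;> simp only [hXi, hX'i, if_true,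
    if_false, reduceCtorEq, Option.some_inj] at hXX'
  · exact hg X X' hX hX' hXi hX'i hXX'
  · exact sim_of_not_indep hXi hX'i

section Representation

variable (F : Type*) [Field F] {W : Type*} [AddCommGroup W] [Module F W]

def Matroid.IsRepresentedBy (M : Matroid α) (v : α → W) : Prop :=
  ∀ X ⊆ M.E, M.Indep X ↔ LinearIndepOn F v X

variable {F} {M : Matroid α} {v : α → W}

namespace Matroid.IsRepresentedBy

theorem indep_union_iff (hv : M.IsRepresentedBy F v) {X Z : Set α} (hX : X ⊆ M.E)
    (hZ : Z ⊆ M.E) (hXZ : Disjoint X Z) :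
    M.Indep (X ∪ Z) ↔
      M.Indep X ∧ M.Indep Z ∧ Disjoint (span F (v '' X)) (span F (v '' Z)) := by
  rw [hv _ (union_subset hX hZ), hv X hX, hv Z hZ]
  exact linearIndepOn_union_iff hXZ

theorem sim_of_span_inf_eq (hv : M.IsRepresentedBy F v) {U X X' : Set α} (hX : X ⊆ U)
    (hX' : X' ⊆ U) (hXi : M.Indep X) (hX'i : M.Indep X')
    (h : span F (v '' X) ⊓ span F (v '' (M.E \ U)) = span F (v '' X') ⊓ span F (v '' (M.E \ U))) :
    Sim M U X X' := by
  intro Z hZ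
  have hZE : Z ⊆ M.E := hZ.trans sdiff_subset
  have hdisj : ∀ {Y}, Y ⊆ U → Disjoint Y Z := fun hY =>
    disjoint_of_subset_left hY (subset_sdiff.1 hZ).2.symm
  have hZS : span F (v '' Z) ≤ span F (v '' (M.E \ U)) := span_mono (image_mono hZ)
  have htrace : ∀ A : Submodule F W, Disjoint A (span F (v '' Z)) ↔
      Disjoint (A ⊓ span F (v '' (M.E \ U))) (span F (v '' Z)) := fun A => by
    rw [disjoint_iff, disjoint_iff, inf_assoc, inf_eq_right.2 hZS]
  rw [hv.indep_union_iff hXi.subset_ground hZE (hdisj hX),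
    hv.indep_union_iff hX'i.subset_ground hZE (hdisj hX'), htrace (span F (v '' X)), h,
    ← htrace]
  simp only [hXi, hX'i, true_and]

end Matroid.IsRepresentedBy

theorem LinearIndepOn.ncard_eq_finrank_span {v : α → W} {I : Set α} (hI : LinearIndepOn F v I)
    (hIfin : I.Finite) : I.ncard = finrank F (span F (v '' I)) := by
  have := hIfin.fintype
  rw [image_eq_range, finrank_span_eq_card hI, ← Nat.card_eq_fintype_card, Nat.card_coe_set_eq]

theorem Matroid.IsRepresentedBy.mrank_eq_finrank_span (hv : M.IsRepresentedBy F v) {X : Set α}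
    (hX : X ⊆ M.E) (hXfin : X.Finite) : mrank M X = finrank F (span F (v '' X)) := by
  have := FiniteDimensional.span_of_finite F (hXfin.image v)
  obtain ⟨B, hBX, -, hXB, hB⟩ := exists_linearIndepOn_extension (linearIndepOn_empty F v)
    (empty_subset X)
  have hBspan : span F (v '' B) = span F (v '' X) :=
    le_antisymm (span_mono (image_mono hBX)) (span_le.2 hXB)
  have hBdd : BddAbove {n | ∃ I, I ⊆ X ∧ M.Indep I ∧ I.ncard = n} :=
    ⟨X.ncard, fun _ ⟨_, hIX, _, hn⟩ => hn ▸ ncard_le_ncard hIX hXfin⟩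
  refine le_antisymm (csSup_le ⟨0, ∅, empty_subset X, M.empty_indep, ncard_empty α⟩ ?_) ?_
  · rintro _ ⟨I, hIX, hI, rfl⟩
    rw [((hv I (hIX.trans hX)).1 hI).ncard_eq_finrank_span (hXfin.subset hIX)]
    exact finrank_mono (span_mono (image_mono hIX))
  · rw [← hBspan, ← hB.ncard_eq_finrank_span (hXfin.subset hBX)]
    exact le_csSup hBdd ⟨B, hBX, (hv B (hBX.trans hX)).2 hB, rfl⟩

theorem Matroid.IsRepresentedBy.finrank_span_inf_eq_connVal (hv : M.IsRepresentedBy F v)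
    (hE : M.E.Finite) {U : Set α} (hU : U ⊆ M.E) :
    finrank F ↥(span F (v '' U) ⊓ span F (v '' (M.E \ U))) = connVal M U := by
  have := FiniteDimensional.span_of_finite F ((hE.subset hU).image v)
  have hEU : (M.E \ U).Finite := hE.subset sdiff_subset
  have := FiniteDimensional.span_of_finite F (hEU.image v)
  have hmod := finrank_sup_add_finrank_inf_eq (span F (v '' U)) (span F (v '' (M.E \ U)))
  rw [← span_union, ← image_union, union_sdiff_cancel hU] at hmod
  rw [connVal, hv.mrank_eq_finrank_span hU (hE.subset hU),
    hv.mrank_eq_finrank_span sdiff_subset hEU,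
    hv.mrank_eq_finrank_span subset_rfl hE]
  omega

end Representation

theorem card_submodule_le_two_pow (F V : Type*) [Field F] [Finite F] [AddCommGroup V] [Module F V]
    [FiniteDimensional F V] {l : ℕ} (hV : finrank F V ≤ l) :
    Nat.card (Submodule F V) ≤ 2 ^ ∑ i ∈ Finset.range l, Nat.card F ^ i := by
  classical
  have := Module.finite_of_finite F (M := V)
  have := Fintype.ofFinite (ℙ F V)
  have hinj : Function.Injective fun A : Submodule F V =>
      ((Projectivization.Subspace.submodule.symm A : Projectivization.Subspace F V) :
        Set (ℙ F V)) :=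
    SetLike.coe_injective.comp Projectivization.Subspace.submodule.symm.injective
  calc Nat.card (Submodule F V) ≤ Nat.card (Set (ℙ F V)) := Nat.card_le_card_of_injective _ hinj
    _ = 2 ^ Nat.card (ℙ F V) := by
      rw [← Fintype.card_eq_nat_card, Fintype.card_set, Fintype.card_eq_nat_card]
    _ ≤ 2 ^ ∑ i ∈ Finset.range l, Nat.card F ^ i := by
      rw [Projectivization.card_of_finrank F V rfl]
      exact Nat.pow_le_pow_right two_pos
        (Finset.sum_le_sum_of_subset (Finset.range_subset_range.2 hV))

end

theorem representable_sim_classes_general {α : Type*} (F : Type) [Field F] [Fintype F]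
    (l : ℕ) (M : Matroid α) (hfin : M.E.Finite)
    (hrep : ∃ (W : Type) (_ : AddCommGroup W) (_ : Module F W) (v : α → W),
      ∀ X ⊆ M.E, (M.Indep X ↔ Set.InjOn v X ∧ LinearIndependent F (fun x : X => v x.1)))
    (U : Set α) (hU : U ⊆ M.E) (hconn : connVal M U ≤ l) :
    SimClassesLE M U (2 ^ (∑ i ∈ Finset.range l, Fintype.card F ^ i) + 1) := by
  obtain ⟨W, _, _, v, hrep⟩ := hrep
  have hv : M.IsRepresentedBy F v := fun X hX =>
    (hrep X hX).trans ⟨And.right, fun h => ⟨h.injOn, h⟩⟩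
  set S := span F (v '' (M.E \ U))
  set G := span F (v '' U) ⊓ S
  have := FiniteDimensional.span_of_finite F ((hfin.subset hU).image v)
  have : Finite G := Module.finite_of_finite F
  have : Finite (Submodule F G) := Finite.of_injective _ SetLike.coe_injective
  have hG : finrank F G ≤ l := (hv.finrank_span_inf_eq_connVal hfin hU).trans_le hconn
  refine (SimClassesLE.of_indep_invariant (fun X => (span F (v '' X) ⊓ S).comap G.subtype)
    fun X X' hX hX' hXi hX'i hXX' => hv.sim_of_span_inf_eq hX hX' hXi hX'i ?_).mono ?_
  · have hXG : ∀ {Y}, Y ⊆ U → span F (v '' Y) ⊓ S ≤ G := fun hY =>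
      inf_le_inf_right S (span_mono (image_mono hY))
    simpa only [map_comap_subtype, inf_eq_right.2 (hXG hX), inf_eq_right.2 (hXG hX')] using
      congrArg (map G.subtype) hXX'
  · simpa only [Fintype.card_eq_nat_card, add_le_add_iff_right] using
      card_submodule_le_two_pow F G hG

/-- finite-field representable matroids are strongly pigeonhole with the
explicit bound 2^(q^(λ-1)+⋯+q+1) + 1 on the number of classes of ∼_U. -/
theorem representable_sim_classes {α : Type*} (F : Type) [Field F] [Fintype F]
    (l : ℕ) (hl : 0 < l) (M : Matroid α) (hfin : M.E.Finite)
    (hrep : ∃ (W : Type) (_ : AddCommGroup W) (_ : Module F W) (v : α → W),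
      ∀ X ⊆ M.E, (M.Indep X ↔ Set.InjOn v X ∧ LinearIndependent F (fun x : X => v x.1)))
    (U : Set α) (hU : U ⊆ M.E) (hconn : connVal M U ≤ l) :
    SimClassesLE M U (2 ^ (∑ i ∈ Finset.range l, Fintype.card F ^ i) + 1) :=
  representable_sim_classes_general F l M hfin hrep U hU hconn
end

section
/- Let F be a finite field and let M be a matroid on ground set E with an F-representation v : E → W into an F-vector space W. Let U ⊆ E and set V = E ∖ U. If X and X' are independent subsets of U such that span(v(X)) ∩ span(v(V)) = span(v(X')) ∩ span(v(V)) as subspaces of W, then X ∼_U X'; that is, for every Z ⊆ V, the set X ∪ Z is independent in M if and only if X' ∪ Z is independent in M. -/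
/-! For `Y` independent and `Z ⊆ E ∖ U` disjoint from `Y`, the set `Y ∪ Z` is independent exactly
when `Z` is and `span (v Y)` meets `span (v Z)` trivially. As `span (v Z) ≤ span (v (E ∖ U))`, the
latter only depends on `span (v Y) ⊓ span (v (E ∖ U))`. -/

open Set

section LinearAlgebra

open Submodule

theorem LinearIndepOn.union_of_inf_span_le {ι R M : Type*} [Ring R] [AddCommGroup M]
    [Module R M] {v : ι → M} {s s' t r : Set ι} (hst : LinearIndepOn R v (s ∪ t))
    (hdj : Disjoint s t) (hs' : LinearIndepOn R v s') (htr : t ⊆ r)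
    (hle : span R (v '' s') ⊓ span R (v '' r) ≤ span R (v '' s)) :
    LinearIndepOn R v (s' ∪ t) := by
  obtain ⟨-, ht, hspan⟩ := (linearIndepOn_union_iff hdj).1 hst
  refine hs'.union ht (disjoint_iff_inf_le.2 ?_)
  calc span R (v '' s') ⊓ span R (v '' t)
      ≤ span R (v '' s) ⊓ span R (v '' t) :=
        le_inf ((inf_le_inf_left _ (span_mono (image_mono htr))).trans hle) inf_le_right
    _ ≤ ⊥ := hspan.le_bot

end LinearAlgebra

section Representation

open Submodule

variable {α F W : Type*} [DivisionRing F] [AddCommGroup W] [Module F W] {M : Matroid α}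
  {v : α → W}

theorem Matroid.indep_iff_linearIndepOn_of_rep
    (hrep : ∀ X ⊆ M.E, (M.Indep X ↔ InjOn v X ∧ LinearIndependent F (fun x : X => v x.1)))
    {X : Set α} (hX : X ⊆ M.E) : M.Indep X ↔ LinearIndepOn F v X := by
  rw [hrep X hX]
  exact ⟨And.right, fun h => ⟨h.injOn, h⟩⟩

theorem Matroid.indep_union_of_inf_span_le
    (hrep : ∀ X ⊆ M.E, (M.Indep X ↔ InjOn v X ∧ LinearIndependent F (fun x : X => v x.1)))
    {U X X' Z : Set α} (hXU : X ⊆ U) (hX' : M.Indep X') (hZ : Z ⊆ M.E \ U)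
    (hle : span F (v '' X') ⊓ span F (v '' (M.E \ U)) ≤ span F (v '' X))
    (hXZ : M.Indep (X ∪ Z)) : M.Indep (X' ∪ Z) := by
  have hdj : Disjoint X Z := disjoint_of_subset_left hXU (subset_sdiff.1 hZ).2.symm
  have hX'Z : X' ∪ Z ⊆ M.E := union_subset hX'.subset_ground (hZ.trans sdiff_subset)
  rw [indep_iff_linearIndepOn_of_rep hrep hX'Z]
  exact ((indep_iff_linearIndepOn_of_rep hrep hXZ.subset_ground).1 hXZ).union_of_inf_span_le hdj
    ((indep_iff_linearIndepOn_of_rep hrep hX'.subset_ground).1 hX') hZ hle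

end Representation

theorem representable_span_inter_sim_general {α F W : Type*} [Field F]
    [AddCommGroup W] [Module F W] (M : Matroid α) (v : α → W)
    (hrep : ∀ X ⊆ M.E, (M.Indep X ↔ Set.InjOn v X ∧ LinearIndependent F (fun x : X => v x.1)))
    (U : Set α)
    (X X' : Set α) (hXU : X ⊆ U) (hX'U : X' ⊆ U)
    (hX : M.Indep X) (hX' : M.Indep X')
    (hspan : Submodule.span F (v '' X) ⊓ Submodule.span F (v '' (M.E \ U))
           = Submodule.span F (v '' X') ⊓ Submodule.span F (v '' (M.E \ U))) :
    ∀ Z ⊆ M.E \ U, (M.Indep (X ∪ Z) ↔ M.Indep (X' ∪ Z)) := fun _ hZ =>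
  ⟨M.indep_union_of_inf_span_le hrep hXU hX' hZ (hspan.ge.trans inf_le_left),
    M.indep_union_of_inf_span_le hrep hX'U hX hZ (hspan.le.trans inf_le_left)⟩

/-- for an F-representation, equality of the intersections of spans with the
span of the complementary side implies equivalence under ∼_U. -/
theorem representable_span_inter_sim {α F W : Type*} [Field F] [Fintype F]
    [AddCommGroup W] [Module F W] (M : Matroid α) (v : α → W)
    (hrep : ∀ X ⊆ M.E, (M.Indep X ↔ Set.InjOn v X ∧ LinearIndependent F (fun x : X => v x.1)))
    (U : Set α) (hU : U ⊆ M.E)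
    (X X' : Set α) (hXU : X ⊆ U) (hX'U : X' ⊆ U)
    (hX : M.Indep X) (hX' : M.Indep X')
    (hspan : Submodule.span F (v '' X) ⊓ Submodule.span F (v '' (M.E \ U))
           = Submodule.span F (v '' X') ⊓ Submodule.span F (v '' (M.E \ U))) :
    ∀ Z ⊆ M.E \ U, (M.Indep (X ∪ Z) ↔ M.Indep (X' ∪ Z)) :=
  representable_span_inter_sim_general M v hrep U X X' hXU hX'U hX hX' hspan
end

section
/- Let 𝓜 be a class of matroids. Then 𝓜 is pigeonhole if and only if the class {M* : M ∈ 𝓜} of dual matroids is pigeonhole. -/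
open Set

/-! Branch-width is self-dual: the dual rank formula `r*(X) + r(E) = r(E ∖ X) + |X|` gives
`λ_{M*} = λ_M`, so a decomposition of `M` is one of `M*` with the same width.

For decomposition-width, fix a displayed set `U` and a map `f` whose fibres lie in `∼_U`-classes.
For `X ⊆ U` and `Z ⊆ E ∖ U`, the set `X ∪ Z` is independent in `M*` iff some basis `I ∪ J` of `M`
(`I ⊆ U`, `J ⊆ E ∖ U`) avoids it. If `I ∼_U I'` and `I' ∪ J₀` is also a basis, then `I' ∪ J` is a
basis (it is independent, and `|I'| ≥ |I|` by comparing `I ∪ J₀` with `I' ∪ J₀`), so the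
`∼*_U`-class of `X` is determined by the set of `f`-values of the `U`-parts of bases avoiding `X`.
Hence `dw(M*) ≤ 2 ^ dw(M)`, and `M** = M` gives both directions. -/

open Matroid

section

variable {α : Type*} {M : Matroid α} {U X I I' J J₀ : Set α}

lemma cast_mrank [M.RankFinite] (X : Set α) : (mrank M X : ℕ∞) = M.eRk X := by
  obtain ⟨I, hI⟩ := M.exists_isBasis' X
  have hmax : IsGreatest {n | ∃ I, I ⊆ X ∧ M.Indep I ∧ I.ncard = n} I.ncard := by
    refine ⟨⟨I, hI.subset, hI.indep, rfl⟩, ?_⟩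
    rintro _ ⟨J, hJX, hJ, rfl⟩
    have hle := hJ.encard_le_eRk_of_subset hJX
    rw [← hI.encard_eq_eRk, ← hJ.finite.cast_ncard_eq, ← hI.indep.finite.cast_ncard_eq] at hle
    exact_mod_cast hle
  rw [mrank, hmax.csSup_eq, hI.indep.finite.cast_ncard_eq, hI.encard_eq_eRk]

lemma mrank_empty [M.RankFinite] : mrank M ∅ = 0 := by
  exact_mod_cast (cast_mrank ∅).trans M.eRk_empty

lemma mrank_union_le (M : Matroid α) [M.RankFinite] (X Y : Set α) :
    mrank M (X ∪ Y) ≤ mrank M X + mrank M Y := by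
  have h := M.eRk_union_le_eRk_add_eRk X Y
  rw [← cast_mrank, ← cast_mrank, ← cast_mrank] at h
  exact_mod_cast h

lemma mrank_dual_add_mrank_ground [M.Finite] (hX : X ⊆ M.E) :
    mrank M✶ X + mrank M M.E = mrank M (M.E \ X) + X.ncard := by
  have h := M.eRk_dual_add_eRank X hX
  rw [← eRk_ground, ← cast_mrank, ← cast_mrank, ← cast_mrank,
    ← (M.ground_finite.subset hX).cast_ncard_eq] at h
  exact_mod_cast h

lemma connVal_dual [M.Finite] (hU : U ⊆ M.E) : connVal M✶ U = connVal M U := by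
  have hdU := mrank_dual_add_mrank_ground hU
  have hdV := mrank_dual_add_mrank_ground (sdiff_subset : M.E \ U ⊆ M.E)
  have hdE := mrank_dual_add_mrank_ground (subset_refl M.E)
  rw [sdiff_sdiff_cancel_left hU] at hdV
  rw [sdiff_self, mrank_empty] at hdE
  have hsub := mrank_union_le M U (M.E \ U)
  rw [union_sdiff_cancel hU] at hsub
  have hcard := ncard_sdiff_add_ncard_of_subset hU M.ground_finite
  rw [connVal, connVal, dual_ground]
  omega

lemma Sim.isBase_union [M.RankFinite] (h : Sim M U I I') (hI : I ⊆ U) (hI' : I' ⊆ U)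
    (hJ : J ⊆ M.E \ U) (hJ₀ : J₀ ⊆ M.E \ U) (hB : M.IsBase (I ∪ J))
    (hB₀ : M.IsBase (I' ∪ J₀)) : M.IsBase (I' ∪ J) := by
  have hI'J : M.Indep (I' ∪ J) := (h J hJ).mp hB.indep
  have hIJ₀ : M.Indep (I ∪ J₀) := (h J₀ hJ₀).mpr hB₀.indep
  have hdisj {K L : Set α} (hK : K ⊆ U) (hL : L ⊆ M.E \ U) : Disjoint K L := by tauto_set
  have hIle : I.encard ≤ I'.encard := by
    have hle := hIJ₀.encard_le_eRank
    rw [← hB₀.encard_eq_eRank, encard_union_eq (hdisj hI hJ₀),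
      encard_union_eq (hdisj hI' hJ₀)] at hle
    exact (ENat.add_le_add_iff_right (hB₀.finite.subset subset_union_right).encard_lt_top.ne).mp hle
  refine hI'J.isBase_of_eRk_ge hI'J.finite ?_
  calc M.eRank = I.encard + J.encard := by rw [← hB.encard_eq_eRank, encard_union_eq (hdisj hI hJ)]
    _ ≤ I'.encard + J.encard := by gcongr
    _ = M.eRk (I' ∪ J) := by rw [hI'J.eRk_eq_encard, encard_union_eq (hdisj hI' hJ)]

def baseClassesAvoiding {κ : Type*} (M : Matroid α) (U : Set α) (f : Set α → κ) (X : Set α) :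
    Set κ :=
  f '' {I | I ⊆ U \ X ∧ ∃ J ⊆ M.E \ U, M.IsBase (I ∪ J)}

lemma dual_indep_union_of_baseClassesAvoiding_subset {κ : Type*} [M.RankFinite] {f : Set α → κ}
    {X X' Z : Set α} (hU : U ⊆ M.E)
    (hf : ∀ I I', I ⊆ U → I' ⊆ U → f I = f I' → Sim M U I I') (hX' : X' ⊆ U)
    (hZ : Z ⊆ M.E \ U) (hXX' : baseClassesAvoiding M U f X ⊆ baseClassesAvoiding M U f X')
    (h : M✶.Indep (X ∪ Z)) : M✶.Indep (X' ∪ Z) := by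
  obtain ⟨-, B, hB, hdisj⟩ := dual_indep_iff_exists'.mp h
  have hBU : B ∩ U ⊆ U \ X := by tauto_set
  have hBE : B \ U ⊆ M.E \ U := sdiff_subset_sdiff_left hB.subset_ground
  rw [← inter_union_sdiff B U] at hB
  obtain ⟨I', ⟨hI'X', J₀, hJ₀, hB₀⟩, hfI'⟩ := hXX' ⟨B ∩ U, ⟨hBU, B \ U, hBE, hB⟩, rfl⟩
  have hI'U : I' ⊆ U := hI'X'.trans sdiff_subset
  have hsim : Sim M U (B ∩ U) I' := hf _ _ inter_subset_right hI'U hfI'.symm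
  have hB' : M.IsBase (I' ∪ B \ U) := hsim.isBase_union inter_subset_right hI'U hBE hJ₀ hB hB₀
  have hZB : Disjoint Z B := hdisj.mono_left subset_union_right
  refine dual_indep_iff_exists'.mpr
    ⟨union_subset (hX'.trans hU) (hZ.trans sdiff_subset), _, hB', ?_⟩
  exact disjoint_union_left.mpr
    ⟨disjoint_union_right.mpr ⟨disjoint_sdiff_right.mono_right hI'X',
        disjoint_sdiff_right.mono_left hX'⟩,
      disjoint_union_right.mpr ⟨disjoint_sdiff_left.mono hZ hI'U, hZB.mono_right sdiff_subset⟩⟩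

lemma SimClassesLE.dual [M.RankFinite] {k : ℕ} (hU : U ⊆ M.E) (h : SimClassesLE M U k) :
    SimClassesLE M✶ U (2 ^ k) := by
  obtain ⟨f, hf⟩ := h
  let e : Set (Fin k) ≃ Fin (2 ^ k) := Fintype.equivFinOfCardEq (by simp [Fintype.card_set])
  refine ⟨fun X ↦ e (baseClassesAvoiding M U f X), fun X X' hX hX' hXX' Z hZ ↦ ?_⟩
  have hclasses := e.injective hXX'
  exact ⟨dual_indep_union_of_baseClassesAvoiding_subset hU hf hX' hZ hclasses.subset,
    dual_indep_union_of_baseClassesAvoiding_subset hU hf hX hZ hclasses.superset⟩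

namespace Decomp

def dual (D : Decomp M) : Decomp M✶ := { D with }

lemma ground_finite (D : Decomp M) : M.E.Finite := by
  have := D.fin
  exact finite_coe_iff.mp (Finite.of_equiv _ D.leafEquiv.symm)

variable {D : Decomp M}

lemma Displays.subset_ground (h : D.Displays U) : U ⊆ M.E := by
  obtain ⟨u, v, -, rfl⟩ := h
  exact fun x ⟨hx, _⟩ ↦ hx

lemma dual_displays_iff : D.dual.Displays U ↔ D.Displays U := Iff.rfl

end Decomp

lemma bwLE.dual {l : ℕ} (h : bwLE M l) : bwLE M✶ l := by
  obtain ⟨D, hD⟩ := h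
  have : M.Finite := ⟨D.ground_finite⟩
  refine ⟨D.dual, fun U hU ↦ ?_⟩
  rw [Decomp.dual_displays_iff] at hU
  rw [connVal_dual hU.subset_ground]
  exact hD U hU

lemma bwLE_dual_iff {l : ℕ} : bwLE M✶ l ↔ bwLE M l :=
  ⟨fun h ↦ M.dual_dual ▸ h.dual, bwLE.dual⟩

lemma dwLE.dual {k : ℕ} (h : dwLE M k) : dwLE M✶ (2 ^ k) := by
  obtain ⟨D, hD⟩ := h
  have : M.Finite := ⟨D.ground_finite⟩
  refine ⟨D.dual, fun U hU ↦ ?_⟩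
  rw [Decomp.dual_displays_iff] at hU
  exact (hD U hU).dual hU.subset_ground

lemma Pigeonhole.dual {C : Set (Matroid α)} (h : Pigeonhole C) :
    Pigeonhole {N : Matroid α | ∃ M ∈ C, N = M✶} := by
  intro l hl
  obtain ⟨ρ, hρ⟩ := h l hl
  refine ⟨2 ^ ρ, ?_⟩
  rintro _ ⟨M, hM, rfl⟩ hbw
  exact (hρ M hM (bwLE_dual_iff.mp hbw)).dual

end

/-- a class is pigeonhole iff its dual class is pigeonhole. -/
theorem pigeonhole_iff_dual_pigeonhole {α : Type*} (C : Set (Matroid α)) :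
    Pigeonhole C ↔ Pigeonhole {N : Matroid α | ∃ M ∈ C, N = M✶} := by
  refine ⟨Pigeonhole.dual, fun h ↦ ?_⟩
  have hC : {N : Matroid α | ∃ M ∈ {N : Matroid α | ∃ M ∈ C, N = M✶}, N = M✶} = C := by
    ext N
    simp
  simpa [hC] using h.dual
end

section
/- Let G be a finite bipartite simple graph with bipartition (A, B), let M[G] be its fundamental transversal matroid, let λ be a positive integer, and let (U, V) be a partition of A ∪ B with λ_{M[G]}(U) ≤ λ. Let H be the subgraph of G consisting of all edges that join a vertex of B ∩ U to a vertex of A ∩ V, or a vertex of B ∩ V to a vertex of A ∩ U. Then every matching of H contains at most λ edges. -/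
open Set

/-- A matching of a graph: a set of edges, pairwise sharing no vertex. -/
def IsGraphMatching {α : Type*} (G : SimpleGraph α) (m : Set (Sym2 α)) : Prop :=
  m ⊆ G.edgeSet ∧ m.Pairwise fun e f => ∀ x, x ∈ e → x ∉ f

/-- A matching \`m\` certifies the independence of \`X\` in the fundamental transversal matroid
of the bipartite graph \`G\` with bipartition \`(A, B)\`: \`|m| = |X ∩ A|\` and every edge of
\`m\` joins a vertex of \`X ∩ A\` to a vertex of \`B \ X\`. -/
def CertifiesIndep {α : Type*} (G : SimpleGraph α) (A B X : Set α) (m : Set (Sym2 α)) : Prop :=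
  IsGraphMatching G m ∧ m.Finite ∧ m.ncard = (X ∩ A).ncard ∧
    ∀ e ∈ m, ∃ a b, a ∈ X ∩ A ∧ b ∈ B \ X ∧ e = s(a, b)

/-!
Every independent set `X` of `M[G]` has at most `|B|` elements, since its certifying matching
injects `X ∩ A` into `B \ X`; hence `r(E) ≤ |B|`. Split a crossing matching `m` according to the
side containing the `A`-end of each edge. The edges `m_U` with `A`-end in `U` have their `B`-end
in `V`, so they certify the independence of `(B ∩ U) ∪ (A-ends of m_U) ⊆ U`, giving
`r(U) ≥ |B ∩ U| + |m_U|`; symmetrically `r(V) ≥ |B ∩ V| + |m_V|`. Adding the two bounds,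
`λ(U) = r(U) + r(V) - r(E) ≥ |m|`.
-/

section

variable {α : Type*}

lemma Set.Finite.sym2 {s : Set α} (hs : s.Finite) : s.sym2.Finite := by
  rw [sym2_eq_mk_image]
  exact (hs.prod hs).image _

namespace IsGraphMatching

variable {G : SimpleGraph α} {m n : Set (Sym2 α)}

lemma mono (hm : IsGraphMatching G m) (hnm : n ⊆ m) : IsGraphMatching G n :=
  ⟨hnm.trans hm.1, hm.2.mono hnm⟩

lemma injOn (hm : IsGraphMatching G m) {f : Sym2 α → α} (hf : ∀ e ∈ m, f e ∈ e) :
    InjOn f m := by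
  intro e he e' he' hee
  by_contra hne
  exact hm.2 he he' hne (f e) (hf e he) (hee ▸ hf e' he')

lemma ncard_le (hm : IsGraphMatching G m) {S : Set α} (hS : S.Finite)
    (hmS : ∀ e ∈ m, ∃ x ∈ S, x ∈ e) : m.ncard ≤ S.ncard := by
  obtain hα | hα := isEmpty_or_nonempty α
  · simp [eq_empty_of_isEmpty m]
  choose! f hfS hfe using hmS
  exact ncard_le_ncard_of_injOn f hfS (hm.injOn hfe) hS

end IsGraphMatching

lemma ncard_le_mrank_of_indep (M : Matroid α) (hE : M.E.Finite) {I X : Set α}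
    (hI : M.Indep I) (hIX : I ⊆ X) : I.ncard ≤ mrank M X :=
  le_csSup ⟨M.E.ncard, by rintro _ ⟨J, -, hJ, rfl⟩; exact ncard_le_ncard hJ.subset_ground hE⟩
    ⟨I, hIX, hI, rfl⟩

lemma mrank_le_of_forall_indep (M : Matroid α) {X : Set α} {k : ℕ}
    (h : ∀ I ⊆ X, M.Indep I → I.ncard ≤ k) : mrank M X ≤ k :=
  csSup_le ⟨0, ∅, empty_subset X, M.empty_indep, ncard_empty α⟩
    fun _ ⟨I, hIX, hI, hn⟩ => hn ▸ h I hIX hI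

section Transversal

variable {G : SimpleGraph α} {A B : Set α}

lemma CertifiesIndep.ncard_le {X : Set α} {m : Set (Sym2 α)} (hB : B.Finite)
    (hXAB : X ⊆ A ∪ B) (h : CertifiesIndep G A B X m) : X.ncard ≤ B.ncard := by
  obtain ⟨hm, -, hcard, hends⟩ := h
  have hXA : (X ∩ A).ncard ≤ (B \ X).ncard := hcard ▸ hm.ncard_le hB.sdiff fun e he => by
    obtain ⟨a, b, -, hb, rfl⟩ := hends e he
    exact ⟨b, hb, Sym2.mem_mk_right a b⟩
  have hX : X = (X ∩ A) ∪ (X ∩ B) := by rw [← inter_union_distrib_left, inter_eq_left.2 hXAB]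
  calc X.ncard ≤ (X ∩ A).ncard + (X ∩ B).ncard := by
        nth_rw 1 [hX]; exact ncard_union_le _ _
    _ ≤ (B \ X).ncard + (B ∩ X).ncard := by rw [inter_comm X B]; omega
    _ = B.ncard := by rw [add_comm, ncard_inter_add_ncard_sdiff_eq_ncard B X hB]

lemma certifiesIndep_inter_union_image (hAB : Disjoint A B) {W : Set α} {n : Set (Sym2 α)}
    (hn : IsGraphMatching G n) (hnfin : n.Finite) {fa fb : Sym2 α → α}
    (hnab : ∀ e ∈ n, e = s(fa e, fb e)) (ha : ∀ e ∈ n, fa e ∈ A ∩ W)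
    (hb : ∀ e ∈ n, fb e ∈ B \ W) (hinj : InjOn fa n) :
    CertifiesIndep G A B ((B ∩ W) ∪ fa '' n) n := by
  have himA : fa '' n ⊆ A := image_subset_iff.2 fun e he => (ha e he).1
  have hXA : ((B ∩ W) ∪ fa '' n) ∩ A = fa '' n := by
    rw [union_inter_distrib_right, (hAB.symm.mono_left inter_subset_left).inter_eq,
      inter_eq_left.2 himA, empty_union]
  refine ⟨hn, hnfin, by rw [hXA, hinj.ncard_image], fun e he =>
    ⟨fa e, fb e, by rw [hXA]; exact mem_image_of_mem fa he, ⟨(hb e he).1, ?_⟩, hnab e he⟩⟩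
  rintro (⟨-, hW⟩ | hA)
  · exact (hb e he).2 hW
  · exact disjoint_left.1 hAB (himA hA) (hb e he).1

lemma ncard_inter_add_ncard_le_mrank (hfin : (A ∪ B).Finite) (hAB : Disjoint A B)
    {M : Matroid α} (hE : M.E = A ∪ B)
    (hInd : ∀ X ⊆ A ∪ B, (M.Indep X ↔ ∃ m, CertifiesIndep G A B X m))
    {W : Set α} {n : Set (Sym2 α)} (hn : IsGraphMatching G n) (hnfin : n.Finite)
    (hends : ∀ e ∈ n, ∃ a b, e = s(a, b) ∧ a ∈ A ∩ W ∧ b ∈ B \ W) :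
    (B ∩ W).ncard + n.ncard ≤ mrank M W := by
  obtain hα | hα := isEmpty_or_nonempty α
  · simp [eq_empty_of_isEmpty]
  choose! fa fb hnab ha hb using hends
  have hinj : InjOn fa n := hn.injOn fun e he => by
    have hmem := Sym2.mem_mk_left (fa e) (fb e)
    rwa [← hnab e he] at hmem
  have hcert := certifiesIndep_inter_union_image hAB hn hnfin hnab ha hb hinj
  have himA : fa '' n ⊆ A ∩ W := image_subset_iff.2 ha
  have hXAB : (B ∩ W) ∪ fa '' n ⊆ A ∪ B :=
    union_subset (inter_subset_left.trans subset_union_right)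
      (himA.trans (inter_subset_left.trans subset_union_left))
  calc (B ∩ W).ncard + n.ncard = ((B ∩ W) ∪ fa '' n).ncard := by
        rw [ncard_union_eq (hAB.symm.mono inter_subset_left (himA.trans inter_subset_left))
          ((hfin.subset subset_union_right).inter_of_left W) (hnfin.image fa),
          hinj.ncard_image]
    _ ≤ mrank M W :=
        ncard_le_mrank_of_indep M (hE ▸ hfin) ((hInd _ hXAB).2 ⟨n, hcert⟩)
          (union_subset inter_subset_right (himA.trans inter_subset_right))

lemma mrank_le_ncard_right (hfin : (A ∪ B).Finite) {M : Matroid α}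
    (hInd : ∀ X ⊆ A ∪ B, (M.Indep X ↔ ∃ m, CertifiesIndep G A B X m)) :
    mrank M (A ∪ B) ≤ B.ncard :=
  mrank_le_of_forall_indep M fun I hI hIndep =>
    let ⟨_, hcert⟩ := (hInd I hI).1 hIndep
    hcert.ncard_le (hfin.subset subset_union_right) hI

end Transversal

end

theorem crossing_matching_small_general {α : Type*} (G : SimpleGraph α) (A B : Set α)
    (hfin : (A ∪ B).Finite) (hAB : Disjoint A B)
    (M : Matroid α) (hE : M.E = A ∪ B)
    (hInd : ∀ X ⊆ A ∪ B, (M.Indep X ↔ ∃ m, CertifiesIndep G A B X m))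
    (l : ℕ) (U V : Set α)
    (hUV : U ∪ V = A ∪ B) (hdisj : Disjoint U V)
    (hconn : connVal M U ≤ l) :
    ∀ m : Set (Sym2 α), IsGraphMatching G m →
      (∀ e ∈ m, ∃ x y, e = s(x, y) ∧
        ((x ∈ B ∩ U ∧ y ∈ A ∩ V) ∨ (x ∈ B ∩ V ∧ y ∈ A ∩ U))) →
      m.ncard ≤ l := by
  intro m hm hcross
  have hmfin : m.Finite := hfin.sym2.subset fun e he => by
    obtain ⟨x, y, rfl, ⟨⟨hx, -⟩, hy, -⟩ | ⟨⟨hx, -⟩, hy, -⟩⟩ := hcross e he <;>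
      exact ⟨.inr hx, .inl hy⟩
  set S := {e : Sym2 α | ∃ a b, e = s(a, b) ∧ a ∈ A ∩ U ∧ b ∈ B \ U}
  have hmV : ∀ e ∈ m \ S, ∃ a b, e = s(a, b) ∧ a ∈ A ∩ V ∧ b ∈ B \ V := by
    rintro e ⟨he, heS⟩
    obtain ⟨x, y, rfl, ⟨⟨hxB, hxU⟩, hyA, hyV⟩ | ⟨⟨hxB, hxV⟩, hyA, hyU⟩⟩ := hcross e he
    · exact ⟨y, x, Sym2.eq_swap, ⟨hyA, hyV⟩, hxB, disjoint_left.1 hdisj hxU⟩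
    · exact absurd ⟨y, x, Sym2.eq_swap, ⟨hyA, hyU⟩, hxB, disjoint_right.1 hdisj hxV⟩ heS
  have hrU := ncard_inter_add_ncard_le_mrank hfin hAB hE hInd (hm.mono inter_subset_left)
    (hmfin.inter_of_left S) fun e he => he.2
  have hrV := ncard_inter_add_ncard_le_mrank hfin hAB hE hInd (hm.mono sdiff_subset)
    hmfin.sdiff hmV
  have hrE := mrank_le_ncard_right hfin hInd
  have hVU : V = (A ∪ B) \ U := by rw [← hUV, union_sdiff_cancel_left hdisj.inter_eq.subset]
  have hB : B \ U = B ∩ V := by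
    rw [hVU, ← inter_sdiff_assoc, inter_eq_left.2 subset_union_right]
  have hBsplit := ncard_inter_add_ncard_sdiff_eq_ncard B U (hfin.subset subset_union_right)
  have hmsplit := ncard_inter_add_ncard_sdiff_eq_ncard m S hmfin
  rw [connVal, hE, ← hVU] at hconn
  rw [hB] at hBsplit
  omega

/-- every matching of the crossing subgraph H has at most λ edges. -/
theorem crossing_matching_small {α : Type*} (G : SimpleGraph α) (A B : Set α)
    (hfin : (A ∪ B).Finite) (hAB : Disjoint A B)
    (hbip : ∀ x y, G.Adj x y → (x ∈ A ∧ y ∈ B) ∨ (x ∈ B ∧ y ∈ A))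
    (M : Matroid α) (hE : M.E = A ∪ B)
    (hInd : ∀ X ⊆ A ∪ B, (M.Indep X ↔ ∃ m, CertifiesIndep G A B X m))
    (l : ℕ) (hl : 0 < l) (U V : Set α)
    (hUV : U ∪ V = A ∪ B) (hdisj : Disjoint U V)
    (hconn : connVal M U ≤ l) :
    ∀ m : Set (Sym2 α), IsGraphMatching G m →
      (∀ e ∈ m, ∃ x y, e = s(x, y) ∧
        ((x ∈ B ∩ U ∧ y ∈ A ∩ V) ∨ (x ∈ B ∩ V ∧ y ∈ A ∩ U))) →
      m.ncard ≤ l :=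
  crossing_matching_small_general G A B hfin hAB M hE hInd l U V hUV hdisj hconn
end

section
/- Let G be a finite simple graph, let M = B(G) be its bicircular matroid, and let (U, V) be a partition of E(G). Let N be the set of vertices of G incident both with an edge of U and with an edge of V. For an independent set X ⊆ U, define its signature to be the set of pairs (V(D) ∩ N, c(D)), taken over all connected components D of G[X] with V(D) ∩ N ≠ ∅, where c(D) is true exactly when D contains a cycle. If X and X' are independent subsets of U with equal signatures, then X ∼_U X'; that is, for every Z ⊆ V, the set X ∪ Z is independent in B(G) if and only if X' ∪ Z is independent in B(G). -/
open Set

/-- The vertices incident with an edge of the edge set \`Y\`. -/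
def edgeVerts {α : Type*} (Y : Set (Sym2 α)) : Set α := {x | ∃ e ∈ Y, x ∈ e}

/-- Two edges are connected within the edge set \`Y\`: joined by a sequence of edges of \`Y\`,
consecutive ones sharing a vertex. -/
def EdgeConn {α : Type*} (Y : Set (Sym2 α)) (e f : Sym2 α) : Prop :=
  Relation.ReflTransGen (fun a b => a ∈ Y ∧ b ∈ Y ∧ ∃ x, x ∈ a ∧ x ∈ b) e f

/-- The connected component of the subgraph with edge set \`Y\` containing the edge \`e\`. -/
def edgeComponent {α : Type*} (Y : Set (Sym2 α)) (e : Sym2 α) : Set (Sym2 α) :=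
  {f ∈ Y | EdgeConn Y e f}

/-- \`C\` is the edge set of a cycle: nonempty, connected, and every incident vertex lies
in exactly two of its edges. -/
def IsCycleSet {α : Type*} (C : Set (Sym2 α)) : Prop :=
  C.Nonempty ∧ (∀ e ∈ C, ∀ f ∈ C, EdgeConn C e f) ∧
    ∀ x ∈ edgeVerts C, ({e ∈ C | x ∈ e}).ncard = 2

/-- Independence in the bicircular matroid B(G): every connected component of the
subgraph with edge set \`X\` contains at most one cycle. -/
def BicircIndep {α : Type*} (X : Set (Sym2 α)) : Prop :=
  ∀ e ∈ X, {C : Set (Sym2 α) | C ⊆ edgeComponent X e ∧ IsCycleSet C}.Subsingleton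

/-- \`M\` is the bicircular matroid B(G). -/
def IsBicircular {α : Type*} (G : SimpleGraph α) (M : Matroid (Sym2 α)) : Prop :=
  M.E = G.edgeSet ∧ ∀ X ⊆ G.edgeSet, (M.Indep X ↔ BicircIndep X)

/-- \`M\` is 3-connected: it has no 1-separations and no 2-separations. -/
def ThreeConnected {α : Type*} (M : Matroid α) : Prop :=
  ∀ U : Set α, U ⊆ M.E → ∀ k : ℕ, 0 < k → k < 3 →
    ¬(k ≤ U.ncard ∧ k ≤ (M.E \ U).ncard ∧ connVal M U < k)

/-- The signature of an independent set `X`: the pairs (V(D) ∩ N, "D contains a cycle")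
over components D of G[X] meeting N. -/
def bicircSig {α : Type*} (N : Set α) (X : Set (Sym2 α)) : Set (Set α × Prop) :=
  {p | ∃ e ∈ X, (edgeVerts (edgeComponent X e) ∩ N).Nonempty ∧
      p = (edgeVerts (edgeComponent X e) ∩ N,
           ∃ C : Set (Sym2 α), C ⊆ edgeComponent X e ∧ IsCycleSet C)}

/-! A connected loopless edge set `K` contains at most one cycle iff `|K| ≤ |V(K)|`, and then it
contains a cycle iff `|K| = |V(K)|`: growing a subset of `K` one adjacent edge at a time never
lowers `|edges| - |vertices|`, two distinct cycles force a vertex of degree three or two disjoint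
cycles joined inside `K`, and a minimal nonempty set with `|V| ≤ |E|` is a cycle. Hence `Y` is
independent in `B(G)` iff `|K| ≤ |V(K)|` for every component `K` of `G[Y]`, with equality exactly
for the components containing a cycle.

Let `K'` be a component of `G[X' ∪ Z]` through an edge `b ∈ Z`, and `K` the component of
`G[X ∪ Z]` through `b`. A walk can pass between `Z` and a component of `G[X]` only at a vertex of
`N`, and the signature supplies a component of `G[X']` with the same trace, so `K` and `K'` have
the same edges in `Z`. The remaining edges of `K` (resp. `K'`) form the components of `G[X]`
(resp. `G[X']`) meeting `V(K ∩ Z)`; the number of acyclic ones, and the vertices they share with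
`K ∩ Z`, are read off the signature. So `|V(K)| - |K| = |V(K')| - |K'|`.
-/

section EdgeSets

variable {α : Type*} {Y W S K C : Set (Sym2 α)} {b e f g : Sym2 α} {x : α}

def Loopless (Y : Set (Sym2 α)) : Prop := ∀ e ∈ Y, ¬ e.IsDiag

noncomputable def edgeDegree (Y : Set (Sym2 α)) (x : α) : ℕ := {e ∈ Y | x ∈ e}.ncard

def EdgeConnected (K : Set (Sym2 α)) : Prop := ∀ e ∈ K, ∀ f ∈ K, EdgeConn K e f

def ContainsCycle (Y : Set (Sym2 α)) : Prop := ∃ C, C ⊆ Y ∧ IsCycleSet C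

lemma Loopless.mono (hY : Loopless Y) (hWY : W ⊆ Y) : Loopless W := fun e he => hY e (hWY he)

lemma edgeVerts_mono (h : W ⊆ Y) : edgeVerts W ⊆ edgeVerts Y :=
  fun _ ⟨e, he, hx⟩ => ⟨e, h he, hx⟩

lemma edgeVerts_union (W Y : Set (Sym2 α)) : edgeVerts (W ∪ Y) = edgeVerts W ∪ edgeVerts Y := by
  ext x
  simp only [edgeVerts, mem_union, or_and_right, exists_or]
  rfl

lemma edgeVerts_biUnion {ι : Type*} (s : Set ι) (D : ι → Set (Sym2 α)) :
    edgeVerts (⋃ i ∈ s, D i) = ⋃ i ∈ s, edgeVerts (D i) := by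
  ext x
  simp only [edgeVerts, mem_iUnion, exists_prop]
  grind

lemma edgeVerts_singleton [DecidableEq α] (e : Sym2 α) : edgeVerts {e} = ↑e.toFinset := by
  ext x
  simp [edgeVerts]

lemma edgeVerts_insert_of_forall_mem (h : ∀ y ∈ e, y ∈ edgeVerts Y) :
    edgeVerts (insert e Y) = edgeVerts Y := by
  refine (edgeVerts_mono (subset_insert e Y)).antisymm' ?_
  rintro y ⟨f, rfl | hf, hy⟩
  exacts [h y hy, ⟨f, hf, hy⟩]

lemma disjoint_of_disjoint_edgeVerts (h : Disjoint (edgeVerts W) (edgeVerts Y)) : Disjoint W Y :=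
  disjoint_left.2 fun e heW heY =>
    disjoint_left.1 h ⟨e, heW, Sym2.out_fst_mem e⟩ ⟨e, heY, Sym2.out_fst_mem e⟩

lemma ncard_edgeVerts_singleton_le (e : Sym2 α) : (edgeVerts {e}).ncard ≤ 2 := by
  classical
  rw [edgeVerts_singleton, ncard_coe_finset, Sym2.card_toFinset]
  split_ifs <;> omega

lemma ncard_edgeVerts_singleton (he : ¬ e.IsDiag) : (edgeVerts {e}).ncard = 2 := by
  classical
  rw [edgeVerts_singleton, ncard_coe_finset, Sym2.card_toFinset_of_not_isDiag e he]

namespace EdgeConn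

lemma symm (h : EdgeConn Y e f) : EdgeConn Y f e := by
  induction h with
  | refl => exact .refl
  | tail _ step ih =>
    obtain ⟨hg, hk, x, hxg, hxk⟩ := step
    exact ih.head ⟨hk, hg, x, hxk, hxg⟩

lemma mono (hWY : W ⊆ Y) (h : EdgeConn W e f) : EdgeConn Y e f :=
  Relation.ReflTransGen.mono (fun _ _ ⟨ha, hb, hx⟩ => ⟨hWY ha, hWY hb, hx⟩) _ _ h

lemma of_adj (he : e ∈ Y) (hf : f ∈ Y) (hxe : x ∈ e) (hxf : x ∈ f) : EdgeConn Y e f :=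
  Relation.ReflTransGen.single ⟨he, hf, x, hxe, hxf⟩

lemma mem_of_closed (h : EdgeConn Y e f) (he : e ∈ S)
    (hS : ∀ g ∈ S, ∀ h ∈ Y, ∀ x ∈ g, x ∈ h → h ∈ S) : f ∈ S := by
  induction h with
  | refl => exact he
  | tail _ step ih =>
    obtain ⟨-, hY, x, hxg, hxh⟩ := step
    exact hS _ ih _ hY x hxg hxh

end EdgeConn

lemma edgeComponent_subset (Y : Set (Sym2 α)) (e : Sym2 α) : edgeComponent Y e ⊆ Y :=
  fun _ h => h.1

lemma self_mem_edgeComponent (he : e ∈ Y) : e ∈ edgeComponent Y e :=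
  ⟨he, Relation.ReflTransGen.refl⟩

lemma mem_edgeComponent_of_adj (hf : f ∈ edgeComponent Y e) (hg : g ∈ Y) (hxf : x ∈ f)
    (hxg : x ∈ g) : g ∈ edgeComponent Y e :=
  ⟨hg, hf.2.trans (EdgeConn.of_adj hf.1 hg hxf hxg)⟩

lemma edgeComponent_subset_of_closed (he : e ∈ S)
    (hS : ∀ g ∈ S, ∀ h ∈ Y, ∀ x ∈ g, x ∈ h → h ∈ S) : edgeComponent Y e ⊆ S :=
  fun _ hf => hf.2.mem_of_closed he hS

lemma edgeComponent_mono (hWY : W ⊆ Y) (e : Sym2 α) : edgeComponent W e ⊆ edgeComponent Y e :=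
  fun _ hf => ⟨hWY hf.1, hf.2.mono hWY⟩

lemma edgeComponent_eq_of_mem (hf : f ∈ edgeComponent Y e) :
    edgeComponent Y f = edgeComponent Y e := by
  ext g
  exact and_congr_right fun _ => ⟨hf.2.trans, hf.2.symm.trans⟩

lemma edgeComponent_eq_of_mem_edgeVerts (he : x ∈ edgeVerts (edgeComponent Y e))
    (hf : x ∈ edgeVerts (edgeComponent Y f)) : edgeComponent Y e = edgeComponent Y f := by
  obtain ⟨e', he', hxe'⟩ := he
  obtain ⟨f', hf', hxf'⟩ := hf
  exact (edgeComponent_eq_of_mem (mem_edgeComponent_of_adj he' hf'.1 hxe' hxf')).symm.trans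
    (edgeComponent_eq_of_mem hf')

lemma edgeComponent_subset_of_mem_edgeVerts (hWY : W ⊆ Y) (hx : x ∈ edgeVerts (edgeComponent W f))
    (hg : g ∈ edgeComponent Y b) (hxg : x ∈ g) : edgeComponent W f ⊆ edgeComponent Y b := by
  obtain ⟨e, he, hxe⟩ := hx
  rw [← edgeComponent_eq_of_mem he,
    ← edgeComponent_eq_of_mem (mem_edgeComponent_of_adj hg (hWY he.1) hxg hxe)]
  exact edgeComponent_mono hWY e

lemma edgeComponent_eq_of_subset (he : e ∈ W) (hWY : W ⊆ Y) (h : edgeComponent Y e ⊆ W) :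
    edgeComponent W e = edgeComponent Y e := by
  refine (edgeComponent_mono hWY e).antisymm
    (edgeComponent_subset_of_closed (self_mem_edgeComponent he) fun g hg k hk x hxg hxk => ?_)
  have hkY := mem_edgeComponent_of_adj (edgeComponent_mono hWY e hg) hk hxg hxk
  exact mem_edgeComponent_of_adj hg (h hkY) hxg hxk

lemma EdgeConn.edgeComponent (h : EdgeConn Y e f) :
    EdgeConn (edgeComponent Y e) e f := by
  induction h with
  | refl => exact Relation.ReflTransGen.refl
  | @tail g k hg step ih =>
    obtain ⟨hgY, hkY, x, hxg, hxk⟩ := step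
    exact ih.tail ⟨⟨hgY, hg⟩, mem_edgeComponent_of_adj ⟨hgY, hg⟩ hkY hxg hxk, x, hxg, hxk⟩

lemma edgeConnected_edgeComponent (Y : Set (Sym2 α)) (e : Sym2 α) :
    EdgeConnected (edgeComponent Y e) := by
  intro f hf g hg
  exact hf.2.edgeComponent.symm.trans hg.2.edgeComponent

namespace EdgeConnected

lemma subset_of_closed (hK : EdgeConnected K) (hf : f ∈ K) (hfS : f ∈ S)
    (hS : ∀ g ∈ S, ∀ h ∈ K, ∀ x ∈ g, x ∈ h → h ∈ S) : K ⊆ S :=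
  fun _ hg => (hK f hf _ hg).mem_of_closed hfS hS

lemma exists_adj_of_not_subset (hK : EdgeConnected K) (hSK : S ⊆ K) (hS : S.Nonempty)
    (hKS : ¬ K ⊆ S) : ∃ e ∈ K \ S, ∃ x ∈ e, x ∈ edgeVerts S := by
  by_contra! h
  obtain ⟨f, hf⟩ := hS
  exact hKS (hK.subset_of_closed (hSK hf) hf fun g hg k hk x hxg hxk =>
    by_contra fun hkS => h k ⟨hk, hkS⟩ x hxk ⟨g, hg, hxg⟩)

end EdgeConnected

lemma edgeDegree_edgeComponent {g : Sym2 α} (hg : g ∈ edgeComponent Y e) (hxg : x ∈ g) :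
    edgeDegree (edgeComponent Y e) x = edgeDegree Y x := by
  unfold edgeDegree
  congr 1
  ext k
  exact ⟨fun h => ⟨h.1.1, h.2⟩, fun h => ⟨mem_edgeComponent_of_adj hg h.1 hxg h.2, h.2⟩⟩

lemma IsCycleSet.edgeConnected (hC : IsCycleSet C) : EdgeConnected C := hC.2.1

end EdgeSets

section Counting

variable {α : Type*} [Finite α] {Y S K C C₁ C₂ : Set (Sym2 α)} {e : Sym2 α} {x : α}

lemma edgeDegree_mono (h : S ⊆ Y) (x : α) : edgeDegree S x ≤ edgeDegree Y x :=
  ncard_le_ncard fun _ he => ⟨h he.1, he.2⟩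

lemma two_le_ncard_edgeVerts (hY : Loopless Y) (he : e ∈ Y) : 2 ≤ (edgeVerts Y).ncard :=
  (ncard_edgeVerts_singleton (hY e he)).ge.trans
    (ncard_le_ncard (edgeVerts_mono (singleton_subset_iff.2 he)))

lemma ncard_edgeVerts_insert_le (hxe : x ∈ e) (hx : x ∈ edgeVerts Y) :
    (edgeVerts (insert e Y)).ncard ≤ (edgeVerts Y).ncard + 1 := by
  obtain ⟨y, rfl⟩ := Sym2.mem_iff_exists.1 hxe
  have : edgeVerts (insert s(x, y) Y) ⊆ insert y (edgeVerts Y) := by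
    rintro z ⟨f, rfl | hf, hz⟩
    · rcases Sym2.mem_iff.1 hz with rfl | rfl
      exacts [Or.inr hx, Or.inl rfl]
    · exact Or.inr ⟨f, hf, hz⟩
  exact (ncard_le_ncard this).trans (ncard_insert_le y _)

lemma sum_edgeDegree (hY : Loopless Y) :
    ∑ x ∈ (edgeVerts Y).toFinite.toFinset, edgeDegree Y x = 2 * Y.ncard := by
  classical
  set V := (edgeVerts Y).toFinite.toFinset
  set E := Y.toFinite.toFinset
  calc ∑ x ∈ V, edgeDegree Y x
      = ∑ x ∈ V, (E.bipartiteAbove (· ∈ ·) x).card := Finset.sum_congr rfl fun x _ => by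
        rw [← ncard_coe_finset, Finset.coe_bipartiteAbove]
        simp [edgeDegree, E]
    _ = ∑ e ∈ E, (V.bipartiteBelow (· ∈ ·) e).card :=
        Finset.sum_card_bipartiteAbove_eq_sum_card_bipartiteBelow _
    _ = ∑ _e ∈ E, 2 := Finset.sum_congr rfl fun e he => by
        rw [Finite.mem_toFinset] at he
        rw [← ncard_coe_finset, Finset.coe_bipartiteBelow, ← ncard_edgeVerts_singleton (hY e he)]
        congr 1
        ext x
        simp only [V, Finite.mem_toFinset, edgeVerts, mem_singleton_iff, exists_eq_left,
          mem_ofPred_eq]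
        exact ⟨And.right, fun h => ⟨⟨e, he, h⟩, h⟩⟩
    _ = 2 * Y.ncard := by rw [Finset.sum_const, smul_eq_mul, ncard_eq_toFinset_card, mul_comm]

lemma ncard_edgeVerts_eq_of_edgeDegree_eq_two (hY : Loopless Y)
    (h : ∀ x ∈ edgeVerts Y, edgeDegree Y x = 2) : (edgeVerts Y).ncard = Y.ncard := by
  have hs := sum_edgeDegree hY
  rw [Finset.sum_congr rfl fun x hx => h x ((Finite.mem_toFinset _).1 hx), Finset.sum_const,
    smul_eq_mul, ← ncard_eq_toFinset_card] at hs
  omega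

lemma ncard_edgeVerts_lt_of_edgeDegree (hY : Loopless Y)
    (h2 : ∀ x ∈ edgeVerts Y, 2 ≤ edgeDegree Y x) (h3 : ∃ x, 3 ≤ edgeDegree Y x) :
    (edgeVerts Y).ncard < Y.ncard := by
  obtain ⟨x, hx⟩ := h3
  obtain ⟨e, he, hxe⟩ := nonempty_of_ncard_ne_zero (show edgeDegree Y x ≠ 0 by omega)
  have hlt : ∑ _x ∈ (edgeVerts Y).toFinite.toFinset, 2
      < ∑ x ∈ (edgeVerts Y).toFinite.toFinset, edgeDegree Y x :=
    Finset.sum_lt_sum (fun y hy => h2 y ((Finite.mem_toFinset _).1 hy))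
      ⟨x, (Finite.mem_toFinset _).2 ⟨e, he, hxe⟩, by omega⟩
  rw [sum_edgeDegree hY, Finset.sum_const, smul_eq_mul, ← ncard_eq_toFinset_card] at hlt
  omega

lemma IsCycleSet.ncard_edgeVerts (hC : IsCycleSet C) (hl : Loopless C) :
    (edgeVerts C).ncard = C.ncard :=
  ncard_edgeVerts_eq_of_edgeDegree_eq_two hl hC.2.2

-- `|S| - |V(S)| ≤ |K| - |V(K)|`: the excess of edges over vertices grows inside a connected set.
lemma EdgeConnected.ncard_add_ncard_edgeVerts_le (hK : EdgeConnected K) (hSK : S ⊆ K)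
    (hS : S.Nonempty) : S.ncard + (edgeVerts K).ncard ≤ K.ncard + (edgeVerts S).ncard := by
  induction S using WellFoundedGT.induction with
  | _ S ih =>
  by_cases hKS : K ⊆ S
  · rw [hSK.antisymm hKS]
  obtain ⟨e, ⟨heK, heS⟩, x, hxe, hx⟩ := hK.exists_adj_of_not_subset hSK hS hKS
  have h := ih (insert e S) (ssubset_insert heS) (insert_subset heK hSK) (insert_nonempty e S)
  rw [ncard_insert_of_notMem heS] at h
  have := ncard_edgeVerts_insert_le hxe hx
  omega

lemma EdgeConnected.ncard_union_add_ncard_edgeVerts_lt (hK : EdgeConnected K) (hSK : S ⊆ K)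
    (hCK : C ⊆ K) (hS : S.Nonempty) (hC : C.Nonempty)
    (hSC : Disjoint (edgeVerts S) (edgeVerts C)) :
    (S ∪ C).ncard + (edgeVerts K).ncard < K.ncard + (edgeVerts (S ∪ C)).ncard := by
  induction S using WellFoundedGT.induction with
  | _ S ih =>
  have hKS : ¬ K ⊆ S := fun h =>
    have ⟨c, hc⟩ := hC
    disjoint_left.1 hSC ⟨c, h (hCK hc), Sym2.out_fst_mem c⟩ ⟨c, hc, Sym2.out_fst_mem c⟩
  obtain ⟨e, ⟨heK, heS⟩, x, hxe, hx⟩ := hK.exists_adj_of_not_subset hSK hS hKS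
  have hxC : x ∉ edgeVerts C := disjoint_left.1 hSC hx
  have hcard : (insert e (S ∪ C)).ncard = (S ∪ C).ncard + 1 :=
    ncard_insert_of_notMem fun h => h.elim heS fun heC => hxC ⟨e, heC, hxe⟩
  by_cases heC : ∃ y ∈ e, y ∈ edgeVerts C
  · -- `e` joins `S` to `C` without adding a vertex
    obtain ⟨y, hye, hy⟩ := heC
    have hV : edgeVerts (insert e (S ∪ C)) = edgeVerts (S ∪ C) := by
      refine edgeVerts_insert_of_forall_mem fun z hz => ?_
      have hxy : x ≠ y := by rintro rfl; exact hxC hy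
      rw [(Sym2.mem_and_mem_iff hxy).1 ⟨hxe, hye⟩, Sym2.mem_iff] at hz
      rw [edgeVerts_union]
      rcases hz with rfl | rfl
      exacts [Or.inl hx, Or.inr hy]
    have := hK.ncard_add_ncard_edgeVerts_le (insert_subset heK (union_subset hSK hCK))
      (insert_nonempty _ _)
    rw [hV, hcard] at this
    omega
  · push Not at heC
    have hdisj : Disjoint (edgeVerts (insert e S)) (edgeVerts C) := by
      refine disjoint_left.2 ?_
      rintro z ⟨f, rfl | hf, hz⟩
      exacts [heC z hz, disjoint_left.1 hSC ⟨f, hf, hz⟩]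
    have h := ih (insert e S) (ssubset_insert heS) (insert_subset heK hSK) (insert_nonempty e S)
      hdisj
    have := ncard_edgeVerts_insert_le hxe (edgeVerts_mono (subset_union_left (t := C)) hx)
    rw [insert_union, hcard] at h
    omega

section Minimal

-- `C` is a minimal nonempty edge set with at least as many edges as vertices.
variable (hl : Loopless C) (hcard : (edgeVerts C).ncard ≤ C.ncard)
  (hmin : ∀ D ⊂ C, D.Nonempty → D.ncard < (edgeVerts D).ncard)
include hl hcard hmin

lemma two_le_edgeDegree_of_forall_ssubset (hx : x ∈ edgeVerts C) : 2 ≤ edgeDegree C x := by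
  by_contra! hlt
  obtain ⟨e, he, hxe⟩ := hx
  have huniq : ∀ f ∈ C, x ∈ f → f = e := fun f hf hxf =>
    (ncard_le_one (s := {f ∈ C | x ∈ f})).1 (by unfold edgeDegree at hlt; omega)
      f ⟨hf, hxf⟩ e ⟨he, hxe⟩
  have hVD : edgeVerts (C \ {e}) ⊆ edgeVerts C \ {x} := by
    rintro y ⟨f, ⟨hfC, hfe⟩, hyf⟩
    refine ⟨⟨f, hfC, hyf⟩, ?_⟩
    rintro rfl
    exact hfe (huniq f hfC hyf)
  have h2 := two_le_ncard_edgeVerts hl he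
  have hD := hmin _ (sdiff_singleton_ssubset.2 he)
    (nonempty_of_ncard_ne_zero (by rw [ncard_sdiff_singleton_of_mem he]; omega))
  have := ncard_le_ncard hVD
  rw [ncard_sdiff_singleton_of_mem he] at hD
  rw [ncard_sdiff_singleton_of_mem (s := edgeVerts C) ⟨e, he, hxe⟩] at this
  omega

lemma edgeDegree_eq_two_of_forall_ssubset (hx : x ∈ edgeVerts C) : edgeDegree C x = 2 := by
  have h2 := fun y hy => two_le_edgeDegree_of_forall_ssubset hl hcard hmin (x := y) hy
  by_contra hne
  have hlt := ncard_edgeVerts_lt_of_edgeDegree hl h2 ⟨x, by have := h2 x hx; omega⟩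
  obtain ⟨e, he, -⟩ := hx
  have := two_le_ncard_edgeVerts hl he
  have hD := hmin _ (sdiff_singleton_ssubset.2 he)
    (nonempty_of_ncard_ne_zero (by rw [ncard_sdiff_singleton_of_mem he]; omega))
  have := ncard_le_ncard (edgeVerts_mono (sdiff_subset (s := C) (t := {e})))
  rw [ncard_sdiff_singleton_of_mem he] at hD
  omega

lemma edgeConnected_of_forall_ssubset : EdgeConnected C := by
  intro e he f hf
  suffices hD : edgeComponent C e = C from (hD.ge hf).2
  by_contra hne
  have hss := (edgeComponent_subset C e).ssubset_of_ne hne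
  refine (hmin _ hss ⟨e, self_mem_edgeComponent he⟩).ne'
    (ncard_edgeVerts_eq_of_edgeDegree_eq_two (hl.mono hss.subset) ?_)
  rintro y ⟨g, hg, hyg⟩
  rw [edgeDegree_edgeComponent hg hyg]
  exact edgeDegree_eq_two_of_forall_ssubset hl hcard hmin ⟨g, hg.1, hyg⟩

lemma isCycleSet_of_forall_ssubset (hne : C.Nonempty) : IsCycleSet C :=
  ⟨hne, edgeConnected_of_forall_ssubset hl hcard hmin,
    fun _ hx => edgeDegree_eq_two_of_forall_ssubset hl hcard hmin hx⟩

end Minimal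

lemma containsCycle_of_ncard_edgeVerts_le (hl : Loopless S) (hne : S.Nonempty)
    (hcard : (edgeVerts S).ncard ≤ S.ncard) : ContainsCycle S := by
  induction S using WellFoundedLT.induction with
  | _ S ih =>
  by_cases h : ∃ D ⊂ S, D.Nonempty ∧ (edgeVerts D).ncard ≤ D.ncard
  · obtain ⟨D, hDS, hD, hDcard⟩ := h
    obtain ⟨C, hCD, hC⟩ := ih D hDS (hl.mono hDS.subset) hD hDcard
    exact ⟨C, hCD.trans hDS.subset, hC⟩
  · push Not at h
    exact ⟨S, subset_rfl, isCycleSet_of_forall_ssubset hl hcard h hne⟩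

lemma IsCycleSet.subset_of_edgeDegree_le (h₁ : IsCycleSet C₁) (h₂ : IsCycleSet C₂)
    (hx₁ : x ∈ edgeVerts C₁) (hx₂ : x ∈ edgeVerts C₂) (hdeg : ∀ y, edgeDegree (C₁ ∪ C₂) y ≤ 2) :
    C₂ ⊆ C₁ := by
  -- at a vertex of `C₁` the union has no edges beyond the two of `C₁`
  have hclosed : ∀ y ∈ edgeVerts C₁, ∀ h ∈ C₂, y ∈ h → h ∈ C₁ := by
    intro y hy h hh hyh
    have heq : {e ∈ C₁ | y ∈ e} = {e ∈ C₁ ∪ C₂ | y ∈ e} :=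
      eq_of_subset_of_ncard_le (fun e he => ⟨Or.inl he.1, he.2⟩)
        ((hdeg y).trans (h₁.2.2 y hy).ge)
    exact (heq.ge ⟨Or.inr hh, hyh⟩).1
  obtain ⟨f, hf, hxf⟩ := hx₂
  exact h₂.edgeConnected.subset_of_closed hf (hclosed x hx₁ f hf hxf)
    fun g hg h hh y hyg hyh => hclosed y ⟨g, hg, hyg⟩ h hh hyh

lemma EdgeConnected.ncard_edgeVerts_lt_of_isCycleSet (hK : EdgeConnected K) (hl : Loopless K)
    (hC₁K : C₁ ⊆ K) (hC₂K : C₂ ⊆ K) (h₁ : IsCycleSet C₁) (h₂ : IsCycleSet C₂) (hne : C₁ ≠ C₂) :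
    (edgeVerts K).ncard < K.ncard := by
  have hSK : C₁ ∪ C₂ ⊆ K := union_subset hC₁K hC₂K
  by_cases hdeg : ∀ y, edgeDegree (C₁ ∪ C₂) y ≤ 2
  · have hdisj : Disjoint (edgeVerts C₁) (edgeVerts C₂) := disjoint_left.2 fun x hx₁ hx₂ =>
      hne ((h₁.subset_of_edgeDegree_le h₂ hx₁ hx₂ hdeg).antisymm
        (h₂.subset_of_edgeDegree_le h₁ hx₂ hx₁ (union_comm C₁ C₂ ▸ hdeg))).symm
    have := hK.ncard_union_add_ncard_edgeVerts_lt hC₁K hC₂K h₁.1 h₂.1 hdisj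
    rw [ncard_union_eq (disjoint_of_disjoint_edgeVerts hdisj), edgeVerts_union,
      ncard_union_eq hdisj, h₁.ncard_edgeVerts (hl.mono hC₁K),
      h₂.ncard_edgeVerts (hl.mono hC₂K)] at this
    omega
  · push Not at hdeg
    have h2 : ∀ y ∈ edgeVerts (C₁ ∪ C₂), 2 ≤ edgeDegree (C₁ ∪ C₂) y := by
      rintro y ⟨f, hf | hf, hyf⟩
      · exact (h₁.2.2 y ⟨f, hf, hyf⟩).ge.trans (edgeDegree_mono subset_union_left y)
      · exact (h₂.2.2 y ⟨f, hf, hyf⟩).ge.trans (edgeDegree_mono subset_union_right y)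
    have := ncard_edgeVerts_lt_of_edgeDegree (hl.mono hSK) h2 hdeg
    have := hK.ncard_add_ncard_edgeVerts_le hSK (h₁.1.mono subset_union_left)
    omega

lemma exists_isCycleSet_ne (hl : Loopless K) (h : (edgeVerts K).ncard < K.ncard) :
    ∃ C₁ C₂, C₁ ⊆ K ∧ C₂ ⊆ K ∧ IsCycleSet C₁ ∧ IsCycleSet C₂ ∧ C₁ ≠ C₂ := by
  obtain ⟨C₁, hC₁K, h₁⟩ :=
    containsCycle_of_ncard_edgeVerts_le hl (nonempty_of_ncard_ne_zero (by omega)) h.le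
  obtain ⟨e, he⟩ := h₁.1
  have := two_le_ncard_edgeVerts hl (hC₁K he)
  have := ncard_le_ncard (edgeVerts_mono (sdiff_subset (s := K) (t := {e})))
  have hK' : (K \ {e}).ncard = K.ncard - 1 := ncard_sdiff_singleton_of_mem (hC₁K he)
  obtain ⟨C₂, hC₂K, h₂⟩ :=
    containsCycle_of_ncard_edgeVerts_le (hl.mono (sdiff_subset (t := {e})))
      (nonempty_of_ncard_ne_zero (by omega)) (by omega)
  exact ⟨C₁, C₂, hC₁K, hC₂K.trans sdiff_subset, h₁, h₂, fun h12 => (hC₂K (h12 ▸ he)).2 rfl⟩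

lemma EdgeConnected.subsingleton_isCycleSet_iff (hK : EdgeConnected K) (hl : Loopless K) :
    {C | C ⊆ K ∧ IsCycleSet C}.Subsingleton ↔ K.ncard ≤ (edgeVerts K).ncard := by
  refine ⟨fun h => ?_, fun h C₁ ⟨h1K, h₁⟩ C₂ ⟨h2K, h₂⟩ => ?_⟩
  · by_contra! hlt
    obtain ⟨C₁, C₂, h1K, h2K, h₁, h₂, hne⟩ := exists_isCycleSet_ne hl hlt
    exact hne (h ⟨h1K, h₁⟩ ⟨h2K, h₂⟩)
  · by_contra hne
    exact (hK.ncard_edgeVerts_lt_of_isCycleSet hl h1K h2K h₁ h₂ hne).not_ge h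

lemma bicircIndep_iff (hl : Loopless Y) :
    BicircIndep Y ↔ ∀ e ∈ Y, (edgeComponent Y e).ncard ≤ (edgeVerts (edgeComponent Y e)).ncard :=
  forall₂_congr fun e _ => (edgeConnected_edgeComponent Y e).subsingleton_isCycleSet_iff
    (hl.mono (edgeComponent_subset Y e))

lemma EdgeConnected.ncard_edgeVerts_le (hK : EdgeConnected K) (hne : K.Nonempty) :
    (edgeVerts K).ncard ≤ K.ncard + 1 := by
  obtain ⟨e, he⟩ := hne
  have := hK.ncard_add_ncard_edgeVerts_le (singleton_subset_iff.2 he) (singleton_nonempty e)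
  have := ncard_edgeVerts_singleton_le e
  rw [ncard_singleton] at *
  omega

lemma EdgeConnected.containsCycle_iff (hK : EdgeConnected K) (hl : Loopless K) (hne : K.Nonempty)
    (hcard : K.ncard ≤ (edgeVerts K).ncard) :
    ContainsCycle K ↔ K.ncard = (edgeVerts K).ncard := by
  refine ⟨fun ⟨C, hCK, hC⟩ => ?_, fun h => containsCycle_of_ncard_edgeVerts_le hl hne h.ge⟩
  have := hK.ncard_add_ncard_edgeVerts_le hCK hC.1
  rw [hC.ncard_edgeVerts (hl.mono hCK)] at this
  omega

open Classical in
lemma BicircIndep.ncard_edgeVerts_edgeComponent (hY : BicircIndep Y) (hl : Loopless Y)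
    (he : e ∈ Y) : (edgeVerts (edgeComponent Y e)).ncard
      = (edgeComponent Y e).ncard + if ContainsCycle (edgeComponent Y e) then 0 else 1 := by
  have hK := edgeConnected_edgeComponent Y e
  have hlK := hl.mono (edgeComponent_subset Y e)
  have hne : (edgeComponent Y e).Nonempty := ⟨e, self_mem_edgeComponent he⟩
  have hcard := (bicircIndep_iff hl).1 hY e he
  have := hK.ncard_edgeVerts_le hne
  split_ifs with hc
  · rw [(hK.containsCycle_iff hlK hne hcard).1 hc, add_zero]
  · rw [hK.containsCycle_iff hlK hne hcard] at hc
    omega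

end Counting

section Signature

variable {α : Type*} {N T : Set α} {W X X' Y Z : Set (Sym2 α)} {b f : Sym2 α} {x : α}

lemma exists_edgeComponent_of_bicircSig_eq (hsig : bicircSig N X = bicircSig N X') (hf : f ∈ X)
    (hne : (edgeVerts (edgeComponent X f) ∩ N).Nonempty) :
    ∃ f' ∈ X', edgeVerts (edgeComponent X' f') ∩ N = edgeVerts (edgeComponent X f) ∩ N := by
  have hmem : (edgeVerts (edgeComponent X f) ∩ N, ContainsCycle (edgeComponent X f))
      ∈ bicircSig N X' := hsig ▸ ⟨f, hf, hne, rfl⟩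
  obtain ⟨f', hf', -, heq⟩ := hmem
  exact ⟨f', hf', (congrArg Prod.fst heq).symm⟩

lemma inter_edgeVerts_subset_of_bicircSig_eq (hsig : bicircSig N X = bicircSig N X')
    (hT : edgeVerts X ∩ T ⊆ N) : T ∩ edgeVerts X ⊆ edgeVerts X' := by
  rintro x ⟨hxT, f, hf, hxf⟩
  have hx : x ∈ edgeVerts (edgeComponent X f) ∩ N :=
    ⟨⟨f, self_mem_edgeComponent hf, hxf⟩, hT ⟨⟨f, hf, hxf⟩, hxT⟩⟩
  obtain ⟨f', hf', heq⟩ := exists_edgeComponent_of_bicircSig_eq hsig hf ⟨x, hx⟩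
  exact edgeVerts_mono (edgeComponent_subset X' f') (heq.ge hx).1

lemma edgeVerts_inter_subset_of_bicircSig_eq (hsig : bicircSig N X = bicircSig N X')
    (hX'Y : X' ⊆ Y) (hf : f ∈ X) (hx : x ∈ edgeVerts (edgeComponent X f) ∩ N)
    (hxK : x ∈ edgeVerts (edgeComponent Y b)) :
    edgeVerts (edgeComponent X f) ∩ N ⊆ edgeVerts (edgeComponent Y b) := by
  obtain ⟨f', -, heq⟩ := exists_edgeComponent_of_bicircSig_eq hsig hf ⟨x, hx⟩
  obtain ⟨k, hk, hxk⟩ := hxK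
  rw [← heq] at hx ⊢
  exact (inter_subset_left.trans (edgeVerts_mono
    (edgeComponent_subset_of_mem_edgeVerts hX'Y hx.1 hk hxk)))

lemma edgeComponent_union_inter_subset (hsig : bicircSig N X = bicircSig N X')
    (hN : edgeVerts X ∩ edgeVerts Z ⊆ N) (hb : b ∈ Z) :
    edgeComponent (X ∪ Z) b ∩ Z ⊆ edgeComponent (X' ∪ Z) b := by
  set K' := edgeComponent (X' ∪ Z) b
  -- an edge of `X` is tracked through the trace of its component, which `X'` reproduces
  have htrace : ∀ h ∈ X, ∀ x ∈ h, x ∈ N → x ∈ edgeVerts K' →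
      edgeVerts (edgeComponent X h) ∩ N ⊆ edgeVerts K' := fun h hh x hxh hxN hxK =>
    edgeVerts_inter_subset_of_bicircSig_eq hsig subset_union_left hh
      ⟨⟨h, self_mem_edgeComponent hh, hxh⟩, hxN⟩ hxK
  suffices hK : edgeComponent (X ∪ Z) b ⊆
      {g ∈ X ∪ Z | (g ∈ Z → g ∈ K') ∧ (g ∈ X → edgeVerts (edgeComponent X g) ∩ N ⊆ edgeVerts K')}
    from fun g ⟨hg, hgZ⟩ => (hK hg).2.1 hgZ
  have hbK' : b ∈ K' := self_mem_edgeComponent (Or.inr hb)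
  refine edgeComponent_subset_of_closed ⟨Or.inr hb, fun _ => hbK', fun hbX => ?_⟩ ?_
  · have hx := Sym2.out_fst_mem b
    exact htrace b hbX _ hx (hN ⟨⟨b, hbX, hx⟩, ⟨b, hb, hx⟩⟩) ⟨b, hbK', hx⟩
  rintro g ⟨hgXZ, hgZ, hgX⟩ k hk x hxg hxk
  refine ⟨hk, fun hkZ => ?_, fun hkX => ?_⟩
  · rcases hgXZ with hgX' | hgZ'
    · obtain ⟨k', hk', hxk'⟩ :=
        hgX hgX' ⟨⟨g, self_mem_edgeComponent hgX', hxg⟩, hN ⟨⟨g, hgX', hxg⟩, ⟨k, hkZ, hxk⟩⟩⟩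
      exact mem_edgeComponent_of_adj hk' (Or.inr hkZ) hxk' hxk
    · exact mem_edgeComponent_of_adj (hgZ hgZ') (Or.inr hkZ) hxg hxk
  · rcases hgXZ with hgX' | hgZ'
    · rw [edgeComponent_eq_of_mem
        (mem_edgeComponent_of_adj (self_mem_edgeComponent hgX') hkX hxg hxk)]
      exact hgX hgX'
    · exact htrace k hkX x hxk (hN ⟨⟨k, hkX, hxk⟩, ⟨g, hgZ', hxg⟩⟩) ⟨g, hgZ hgZ', hxg⟩

lemma edgeComponent_union_inter_eq (hWZ : Disjoint W Z) (hb : b ∈ Z) :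
    edgeComponent (W ∪ Z) b ∩ W = {f ∈ W | (edgeVerts (edgeComponent W f) ∩
      edgeVerts (edgeComponent (W ∪ Z) b ∩ Z)).Nonempty} := by
  set K := edgeComponent (W ∪ Z) b
  ext f
  refine ⟨fun ⟨hfK, hfW⟩ => ⟨hfW, ?_⟩, fun ⟨hfW, x, hxf, k, hk, hxk⟩ => ?_⟩
  · by_contra hempty
    have hKf : edgeComponent (W ∪ Z) f ⊆ edgeComponent W f := by
      refine edgeComponent_subset_of_closed (self_mem_edgeComponent hfW)
        fun g hg k hk x hxg hxk => ?_
      refine hk.elim (fun hkW => mem_edgeComponent_of_adj hg hkW hxg hxk) fun hkZ => ?_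
      have hgK : g ∈ K :=
        (edgeComponent_eq_of_mem hfK).le (edgeComponent_mono subset_union_left f hg)
      exact absurd ⟨x, ⟨g, hg, hxg⟩, k, ⟨mem_edgeComponent_of_adj hgK hk hxg hxk, hkZ⟩, hxk⟩ hempty
    rw [edgeComponent_eq_of_mem hfK] at hKf
    exact disjoint_left.1 hWZ
      (edgeComponent_subset W f (hKf (self_mem_edgeComponent (Or.inr hb)))) hb
  · exact ⟨edgeComponent_subset_of_mem_edgeVerts subset_union_left hxf hk.1 hxk
      (self_mem_edgeComponent hfW), hfW⟩

lemma edgeVerts_inter_edgeVerts_union_inter (W Z : Set (Sym2 α)) (b : Sym2 α) :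
    edgeVerts (edgeComponent (W ∪ Z) b ∩ Z) ∩ edgeVerts (edgeComponent (W ∪ Z) b ∩ W)
      = edgeVerts (edgeComponent (W ∪ Z) b ∩ Z) ∩ edgeVerts W := by
  refine subset_antisymm (inter_subset_inter_right _ (edgeVerts_mono inter_subset_right)) ?_
  rintro x ⟨⟨k, ⟨hkK, hkZ⟩, hxk⟩, f, hfW, hxf⟩
  exact ⟨⟨k, ⟨hkK, hkZ⟩, hxk⟩, f, ⟨mem_edgeComponent_of_adj hkK (Or.inl hfW) hxk hxf, hfW⟩, hxf⟩

lemma ncard_acyclic_eq_ncard_bicircSig (hT : edgeVerts W ∩ T ⊆ N) :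
    {D ∈ edgeComponent W '' {f ∈ W | (edgeVerts (edgeComponent W f) ∩ T).Nonempty} |
      ¬ ContainsCycle D}.ncard = {p ∈ bicircSig N W | (p.1 ∩ T).Nonempty ∧ ¬ p.2}.ncard := by
  have htrace : ∀ f, edgeVerts (edgeComponent W f) ∩ N ∩ T = edgeVerts (edgeComponent W f) ∩ T :=
    fun f => by
      rw [inter_right_comm, inter_eq_left]
      exact fun x hx => hT ⟨edgeVerts_mono (edgeComponent_subset W f) hx.1, hx.2⟩
  rw [← InjOn.ncard_image (f := fun D => (edgeVerts D ∩ N, ContainsCycle D))]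
  · congr 1
    ext p
    constructor
    · rintro ⟨_, ⟨⟨f, ⟨hfW, hfT⟩, rfl⟩, hD⟩, rfl⟩
      rw [← htrace f] at hfT
      exact ⟨⟨f, hfW, hfT.mono inter_subset_left, rfl⟩, hfT, hD⟩
    · rintro ⟨⟨f, hfW, -, rfl⟩, hfT, hD⟩
      rw [htrace f] at hfT
      exact ⟨_, ⟨⟨f, ⟨hfW, hfT⟩, rfl⟩, hD⟩, rfl⟩
  · rintro _ ⟨⟨f, ⟨-, x, hx⟩, rfl⟩, -⟩ _ ⟨⟨g, -, rfl⟩, -⟩ heq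
    have hxf : x ∈ edgeVerts (edgeComponent W f) ∩ N ∩ T := (htrace f).ge hx
    rw [show edgeVerts (edgeComponent W f) ∩ N = edgeVerts (edgeComponent W g) ∩ N from
      congrArg Prod.fst heq] at hxf
    exact edgeComponent_eq_of_mem_edgeVerts hx.1 hxf.1.1

end Signature

section Exchange

variable {α : Type*} [Finite α] {N : Set α} {A B W X X' Z : Set (Sym2 α)} {b : Sym2 α}

open Classical in
lemma BicircIndep.ncard_edgeVerts_eq (hW : BicircIndep W) (hl : Loopless W) (hAW : A ⊆ W)
    (hA : ∀ f ∈ A, edgeComponent W f ⊆ A) :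
    (edgeVerts A).ncard = A.ncard + {D ∈ edgeComponent W '' A | ¬ ContainsCycle D}.ncard := by
  set 𝒞 := edgeComponent W '' A
  have hA_eq : A = ⋃ D ∈ 𝒞, D := by
    rw [biUnion_image]
    exact subset_antisymm (fun f hf => mem_biUnion hf (self_mem_edgeComponent (hAW hf)))
      (iUnion₂_subset hA)
  have hdisjV : 𝒞.PairwiseDisjoint edgeVerts := by
    rintro _ ⟨f, -, rfl⟩ _ ⟨g, -, rfl⟩ hne
    exact disjoint_left.2 fun x hf hg => hne (edgeComponent_eq_of_mem_edgeVerts hf hg)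
  have hdisjE : 𝒞.PairwiseDisjoint id := fun D hD D' hD' hne =>
    disjoint_of_disjoint_edgeVerts (hdisjV hD hD' hne)
  have h𝒞 : 𝒞.Finite := toFinite _
  have hD : ∀ D ∈ 𝒞, (edgeVerts D).ncard = D.ncard + if ¬ ContainsCycle D then 1 else 0 := by
    rintro _ ⟨f, hf, rfl⟩
    rw [hW.ncard_edgeVerts_edgeComponent hl (hAW hf), ite_not]
  have hacyc : ∑ᶠ D ∈ 𝒞, (if ¬ ContainsCycle D then 1 else 0)
      = {D ∈ 𝒞 | ¬ ContainsCycle D}.ncard := by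
    rw [← finsum_mem_inter_support, ← finsum_one]
    refine finsum_mem_congr ?_ fun D hD => if_pos ?_
    · ext D
      simp
    · simpa using hD.2
  have hE : A.ncard = ∑ᶠ D ∈ 𝒞, D.ncard := by
    simpa [← hA_eq] using h𝒞.ncard_biUnion (fun _ _ => toFinite _) hdisjE
  have hV : (edgeVerts A).ncard = ∑ᶠ D ∈ 𝒞, (edgeVerts D).ncard := by
    rw [hA_eq, edgeVerts_biUnion, h𝒞.ncard_biUnion (fun _ _ => toFinite _) hdisjV]
  rw [hV, hE, finsum_mem_congr rfl hD, finsum_mem_add_distrib h𝒞, hacyc]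

-- `|V(K)| - |K| = |V(B)| - |B| - |V(B) ∩ V(W)| + #(acyclic components of `W` meeting `V(B)`)`
lemma ncard_edgeComponent_union (hW : BicircIndep W) (hl : Loopless W) (hWZ : Disjoint W Z)
    (hN : edgeVerts W ∩ edgeVerts Z ⊆ N) (hb : b ∈ Z) (hB : edgeComponent (W ∪ Z) b ∩ Z = B) :
    (edgeVerts (edgeComponent (W ∪ Z) b)).ncard + (edgeVerts B ∩ edgeVerts W).ncard + B.ncard
      = (edgeComponent (W ∪ Z) b).ncard + (edgeVerts B).ncard
        + {p ∈ bicircSig N W | (p.1 ∩ edgeVerts B).Nonempty ∧ ¬ p.2}.ncard := by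
  set K := edgeComponent (W ∪ Z) b
  have hK : K = B ∪ (K ∩ W) := by
    rw [← hB, ← inter_union_distrib_left, union_comm, inter_eq_self_of_subset_left]
    exact edgeComponent_subset _ _
  have hBA : Disjoint B (K ∩ W) := hB ▸ hWZ.symm.mono inter_subset_right inter_subset_right
  have hVBA : edgeVerts B ∩ edgeVerts (K ∩ W) = edgeVerts B ∩ edgeVerts W :=
    hB ▸ edgeVerts_inter_edgeVerts_union_inter W Z b
  have hcount := hW.ncard_edgeVerts_eq hl (inter_subset_right (s := K)) fun f hf =>
    subset_inter ((edgeComponent_eq_of_mem hf.1).le.trans' (edgeComponent_mono subset_union_left f))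
      (edgeComponent_subset W f)
  have himage : {D ∈ edgeComponent W '' (K ∩ W) | ¬ ContainsCycle D}.ncard
      = {p ∈ bicircSig N W | (p.1 ∩ edgeVerts B).Nonempty ∧ ¬ p.2}.ncard := by
    rw [edgeComponent_union_inter_eq hWZ hb, hB]
    exact ncard_acyclic_eq_ncard_bicircSig
      (subset_trans (inter_subset_inter_right _ (edgeVerts_mono (hB ▸ inter_subset_right))) hN)
  have hKcard : K.ncard = B.ncard + (K ∩ W).ncard := by
    conv_lhs => rw [hK]
    exact ncard_union_eq hBA
  have hVK : (edgeVerts K).ncard + (edgeVerts B ∩ edgeVerts W).ncard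
      = (edgeVerts B).ncard + (edgeVerts (K ∩ W)).ncard := by
    have := ncard_union_add_ncard_inter (edgeVerts B) (edgeVerts (K ∩ W))
    rwa [hVBA, ← edgeVerts_union, ← hK] at this
  omega

theorem BicircIndep.union_of_bicircSig_eq (hXZ : BicircIndep (X ∪ Z)) (hX : BicircIndep X)
    (hX' : BicircIndep X') (hl : Loopless (X ∪ Z)) (hl' : Loopless (X' ∪ Z))
    (hdisj : Disjoint X Z) (hdisj' : Disjoint X' Z)
    (hN : edgeVerts X ∩ edgeVerts Z ⊆ N) (hN' : edgeVerts X' ∩ edgeVerts Z ⊆ N)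
    (hsig : bicircSig N X = bicircSig N X') : BicircIndep (X' ∪ Z) := by
  rw [bicircIndep_iff hl']
  intro e he
  by_cases hZ : ∃ b ∈ edgeComponent (X' ∪ Z) e, b ∈ Z
  · obtain ⟨b, hbK, hbZ⟩ := hZ
    rw [← edgeComponent_eq_of_mem hbK]
    obtain ⟨B, hB⟩ : ∃ B, edgeComponent (X ∪ Z) b ∩ Z = B := ⟨_, rfl⟩
    have hB' : edgeComponent (X' ∪ Z) b ∩ Z = B := hB ▸ subset_antisymm
      (subset_inter (edgeComponent_union_inter_subset hsig.symm hN' hbZ) inter_subset_right)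
      (subset_inter (edgeComponent_union_inter_subset hsig hN hbZ) inter_subset_right)
    have hVB : edgeVerts B ⊆ edgeVerts Z := edgeVerts_mono (hB ▸ inter_subset_right)
    have hVBX : edgeVerts B ∩ edgeVerts X = edgeVerts B ∩ edgeVerts X' := subset_antisymm
      (subset_inter inter_subset_left (inter_edgeVerts_subset_of_bicircSig_eq hsig
        ((inter_subset_inter_right _ hVB).trans hN)))
      (subset_inter inter_subset_left (inter_edgeVerts_subset_of_bicircSig_eq hsig.symm
        ((inter_subset_inter_right _ hVB).trans hN')))
    have h := ncard_edgeComponent_union hX (hl.mono subset_union_left) hdisj hN hbZ hB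
    have h' := ncard_edgeComponent_union hX' (hl'.mono subset_union_left) hdisj' hN' hbZ hB'
    have hK := (bicircIndep_iff hl).1 hXZ b (Or.inr hbZ)
    rw [hsig, hVBX] at h
    omega
  · push Not at hZ
    have hsub : edgeComponent (X' ∪ Z) e ⊆ X' := fun g hg => hg.1.resolve_right (hZ g hg)
    have heX' : e ∈ X' := hsub (self_mem_edgeComponent he)
    rw [← edgeComponent_eq_of_subset heX' subset_union_left hsub]
    exact (bicircIndep_iff (hl'.mono subset_union_left)).1 hX' e heX'

end Exchange

/-- independent subsets of U with equal signatures are equivalent under ∼_U. -/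
theorem bicircular_signature_sim {α : Type*} [Fintype α] (G : SimpleGraph α)
    (M : Matroid (Sym2 α)) (hM : IsBicircular G M)
    (U V : Set (Sym2 α)) (hUV : U ∪ V = G.edgeSet) (hdisj : Disjoint U V)
    (X X' : Set (Sym2 α)) (hXU : X ⊆ U) (hX'U : X' ⊆ U)
    (hX : M.Indep X) (hX' : M.Indep X')
    (hsig : bicircSig {x : α | (∃ e ∈ U, x ∈ e) ∧ ∃ e ∈ V, x ∈ e} X
          = bicircSig {x : α | (∃ e ∈ U, x ∈ e) ∧ ∃ e ∈ V, x ∈ e} X') :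
    ∀ Z ⊆ V, (M.Indep (X ∪ Z) ↔ M.Indep (X' ∪ Z)) := by
  intro Z hZV
  have hE : ∀ {W}, W ⊆ U → W ∪ Z ⊆ G.edgeSet := fun hW => hUV ▸ union_subset_union hW hZV
  have hl : ∀ {W}, W ⊆ U → Loopless (W ∪ Z) := fun hW e he =>
    G.not_isDiag_of_mem_edgeSet (hE hW he)
  -- the set `N` of the signature is `edgeVerts U ∩ edgeVerts V`
  have hN : ∀ {W}, W ⊆ U → edgeVerts W ∩ edgeVerts Z ⊆ edgeVerts U ∩ edgeVerts V :=
    fun hW => inter_subset_inter (edgeVerts_mono hW) (edgeVerts_mono hZV)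
  have hdisjZ : ∀ {W}, W ⊆ U → Disjoint W Z := fun hW => hdisj.mono hW hZV
  rw [hM.2 X (subset_union_left.trans (hE hXU))] at hX
  rw [hM.2 X' (subset_union_left.trans (hE hX'U))] at hX'
  rw [hM.2 _ (hE hXU), hM.2 _ (hE hX'U)]
  exact ⟨fun h => h.union_of_bicircSig_eq hX hX' (hl hXU) (hl hX'U) (hdisjZ hXU) (hdisjZ hX'U)
      (hN hXU) (hN hX'U) hsig,
    fun h => h.union_of_bicircSig_eq hX' hX (hl hX'U) (hl hXU) (hdisjZ hX'U) (hdisjZ hXU)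
      (hN hX'U) (hN hXU) hsig.symm⟩
end

section
/- Let H be an infinite group and let m and n be positive integers. There exist disjoint subsets A, B ⊆ H with |A| = m and |B| = n such that the set {ab : a ∈ A, b ∈ B} has exactly mn elements and is disjoint from A ∪ B. -/
/-!
Take any `m` elements `A` avoiding `1` and put `K = A⁻¹A ∪ A`. Since `H` is infinite and at each
step only finitely many elements are excluded, one can greedily choose `n` elements `B` outside `K`
such that `b' b⁻¹ ∉ K` for distinct `b, b' ∈ B`. Then `ab = a'b'` with `b ≠ b'` would put `b' b⁻¹`
in `A⁻¹A`, `ab ∈ A` would put `b` in `A⁻¹A`, and `ab = b'` would put `b' b⁻¹ = a` in `A`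
(or `a = 1` when `b = b'`).
-/

open Set
open scoped Pointwise

section

variable {H : Type*} [Group H] {A B : Set H}

theorem exists_finset_card_eq_pairwise_mul_inv_notMem [Infinite H] {K : Set H} (hK : K.Finite)
    (n : ℕ) :
    ∃ B : Finset H, B.card = n ∧ Disjoint (B : Set H) K ∧
      (B : Set H).Pairwise fun b b' => b' * b⁻¹ ∉ K := by
  classical
  induction n with
  | zero => exact ⟨∅, rfl, by simp, by simp⟩
  | succ n ih =>
    obtain ⟨B, hcard, hdisj, hsep⟩ := ih
    have hfin : (K ∪ B ∪ K * B ∪ K⁻¹ * B).Finite :=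
      ((hK.union B.finite_toSet).union (hK.mul B.finite_toSet)).union (hK.inv.mul B.finite_toSet)
    obtain ⟨c, hc⟩ := hfin.infinite_compl.nonempty
    simp only [mem_compl_iff, mem_union, not_or] at hc
    obtain ⟨⟨⟨hcK, hcB⟩, hcKB⟩, hcKinvB⟩ := hc
    refine ⟨insert c B, by rw [Finset.card_insert_of_notMem hcB, hcard], ?_, ?_⟩
    · rw [Finset.coe_insert, disjoint_insert_left]
      exact ⟨hcK, hdisj⟩
    · rw [Finset.coe_insert, pairwise_insert]
      refine ⟨hsep, fun b hb _ => ⟨fun h => hcKinvB ?_, fun h => hcKB ?_⟩⟩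
      · simpa [mul_assoc] using mul_mem_mul (inv_mem_inv.mpr h) hb
      · simpa [mul_assoc] using mul_mem_mul h hb

theorem injOn_mul_prod_of_pairwise (hB : B.Pairwise fun b b' => b' * b⁻¹ ∉ A⁻¹ * A) :
    InjOn (fun p : H × H => p.1 * p.2) (A ×ˢ B) := by
  rintro ⟨a, b⟩ ⟨ha, hb⟩ ⟨a', b'⟩ ⟨ha', hb'⟩ (heq : a * b = a' * b')
  obtain rfl | hne := eq_or_ne b b'
  · rw [mul_right_cancel heq]
  · refine absurd ?_ (hB hb hb' hne)
    have : b' * b⁻¹ = a'⁻¹ * a := by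
      rw [eq_inv_mul_iff_mul_eq, ← mul_assoc, ← heq, mul_inv_cancel_right]
    exact this ▸ mul_mem_mul (inv_mem_inv.mpr ha') ha

theorem ncard_image2_mul_of_pairwise (hB : B.Pairwise fun b b' => b' * b⁻¹ ∉ A⁻¹ * A) :
    (image2 (· * ·) A B).ncard = A.ncard * B.ncard := by
  rw [← image_prod, (injOn_mul_prod_of_pairwise hB).ncard_image, ncard_prod]

theorem disjoint_image2_mul_left (hB : Disjoint B (A⁻¹ * A)) :
    Disjoint (image2 (· * ·) A B) A := by
  rw [disjoint_left]
  rintro _ ⟨a, ha, b, hb, rfl⟩ hab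
  exact disjoint_left.mp hB hb (by simpa using mul_mem_mul (inv_mem_inv.mpr ha) hab)

theorem disjoint_image2_mul_right (h1A : (1 : H) ∉ A)
    (hB : B.Pairwise fun b b' => b' * b⁻¹ ∉ A) :
    Disjoint (image2 (· * ·) A B) B := by
  rw [disjoint_left]
  rintro _ ⟨a, ha, b, hb, rfl⟩ hab
  obtain hbb | hne := eq_or_ne b (a * b)
  · exact h1A (mul_eq_right.mp hbb.symm ▸ ha)
  · exact hB hb hab hne (by simpa using ha)

end

theorem infinite_group_product_sets_general {H : Type*} [Group H] [Infinite H]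
    (m n : ℕ) :
    ∃ A B : Set H, A.Finite ∧ B.Finite ∧ Disjoint A B ∧
      A.ncard = m ∧ B.ncard = n ∧
      (Set.image2 (fun a b => a * b) A B).ncard = m * n ∧
      Disjoint (Set.image2 (fun a b => a * b) A B) (A ∪ B) := by
  obtain ⟨A, hA1, hAcard⟩ := (finite_singleton (1 : H)).infinite_compl.exists_subset_card_eq m
  have h1A : (1 : H) ∉ (A : Set H) := fun h => hA1 h rfl
  set K : Set H := (A : Set H)⁻¹ * A ∪ A
  have hK : K.Finite := (A.finite_toSet.inv.mul A.finite_toSet).union A.finite_toSet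
  obtain ⟨B, hBcard, hBK, hsep⟩ := exists_finset_card_eq_pairwise_mul_inv_notMem hK n
  refine ⟨A, B, A.finite_toSet, B.finite_toSet,
    (hBK.mono_right subset_union_right).symm, by rw [ncard_coe_finset, hAcard],
    by rw [ncard_coe_finset, hBcard], ?_, ?_⟩
  · rw [ncard_image2_mul_of_pairwise (hsep.mono' fun _ _ h hk => h (subset_union_left hk)),
      ncard_coe_finset, ncard_coe_finset, hAcard, hBcard]
  · exact disjoint_union_right.mpr
      ⟨disjoint_image2_mul_left (hBK.mono_right subset_union_left),
        disjoint_image2_mul_right h1A (hsep.mono' fun _ _ h hk => h (subset_union_right hk))⟩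

/-- in an infinite group there are disjoint sets A, B of sizes m and n whose
product set has exactly mn elements and avoids A ∪ B. -/
theorem infinite_group_product_sets {H : Type*} [Group H] [Infinite H]
    (m n : ℕ) (hm : 0 < m) (hn : 0 < n) :
    ∃ A B : Set H, A.Finite ∧ B.Finite ∧ Disjoint A B ∧
      A.ncard = m ∧ B.ncard = n ∧
      (Set.image2 (fun a b => a * b) A B).ncard = m * n ∧
      Disjoint (Set.image2 (fun a b => a * b) A B) (A ∪ B) :=
  infinite_group_product_sets_general m n
end
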